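/- arXiv:1503.03791 — 11 statements merged into one kernel-verified Lean document; each statement's English description precedes it below -/
import Mathlib

section
/- For every finite simple graph G = (V,E), the map φ_G that sends a decomposition Π of G to the set of edges {v,w} ∈ E such that v and w lie in distinct sets of Π is a bijection between the set of decompositions of G and the set of multicuts of G. -/
open SimpleGraph

variable {V : Type}

section Defs

variable [Fintype V] [DecidableEq V]

/-- A decomposition of a graph `G`: a partition of the vertex set into
blocks each of which induces a connected subgraph of `G`. -/
def IsDecomposition (G : SimpleGraph V) (P : Set (Set V)) : Prop :=
  (∀ U ∈ P, ∀ W ∈ P, U ≠ W → Disjoint U W) ∧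
  (∀ v : V, ∃ U ∈ P, v ∈ U) ∧
  (∀ U ∈ P, (G.induce U).Connected)

/-- An edge `e` straddles distinct blocks of `P` if no block contains both endpoints. -/
def Straddles (P : Set (Set V)) (e : Sym2 V) : Prop := ∀ U ∈ P, ¬ ∀ v ∈ e, v ∈ U

/-- The set of edges of `G` straddling distinct blocks of `P` (the map `φ_G`). -/
def cutEdges (G : SimpleGraph V) (P : Set (Set V)) : Set (Sym2 V) :=
  {e | e ∈ G.edgeSet ∧ Straddles P e}

/-- A multicut of `G`: a set of edges meeting every cycle of `G` in a number of
edges different from 1. -/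
def IsMulticut (G : SimpleGraph V) (M : Set (Sym2 V)) : Prop :=
  M ⊆ G.edgeSet ∧ ∀ ⦃u : V⦄ (c : G.Walk u u), c.IsCycle →
    (M ∩ {e | e ∈ c.edges}).ncard ≠ 1

/-- A multicut of `G'` lifted from `G`. -/
def IsLiftedMulticut (G G' : SimpleGraph V) (M : Set (Sym2 V)) : Prop :=
  ∃ P : Set (Set V), IsDecomposition G P ∧ M = cutEdges G' P

/-- The closed walk `c` has a chord in the graph `H`: an edge of `H` joining two
vertices of `c` that is not an edge of `c`. -/
def HasChord (H : SimpleGraph V) {G : SimpleGraph V} {u : V} (c : G.Walk u u) : Prop :=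
  ∃ e ∈ H.edgeSet, (∀ v ∈ e, v ∈ c.support) ∧ e ∉ c.edges

/-- A `vw`-cut of `G`: a minimal set of edges whose removal disconnects `v` from `w`. -/
def IsCut (G : SimpleGraph V) (v w : V) (C : Finset (Sym2 V)) : Prop :=
  ↑C ⊆ G.edgeSet ∧ ¬ (G.deleteEdges ↑C).Reachable v w ∧
    ∀ C' : Finset (Sym2 V), C' ⊂ C → (G.deleteEdges ↑C').Reachable v w

/-- The cycle inequalities for cycles of `G`. -/
def CycleIneqs (G : SimpleGraph V) (x : Sym2 V → ℕ) : Prop :=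
  ∀ ⦃u : V⦄ (c : G.Walk u u), c.IsCycle → ∀ e ∈ c.edges,
    x e ≤ ∑ e' ∈ c.edges.toFinset.erase e, x e'

/-- The path inequalities for pairs `vw ∈ E' \ E` and `vw`-paths of `G`. -/
def PathIneqs (G G' : SimpleGraph V) (x : Sym2 V → ℕ) : Prop :=
  ∀ v w : V, s(v, w) ∈ G'.edgeSet \ G.edgeSet →
    ∀ p : G.Walk v w, p.IsPath → x s(v, w) ≤ ∑ e ∈ p.edges.toFinset, x e

/-- The cut inequalities for pairs `vw ∈ E' \ E` and `vw`-cuts of `G`. -/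
def CutIneqs (G G' : SimpleGraph V) (x : Sym2 V → ℕ) : Prop :=
  ∀ v w : V, s(v, w) ∈ G'.edgeSet \ G.edgeSet →
    ∀ C : Finset (Sym2 V), IsCut G v w C → 1 - x s(v, w) ≤ ∑ e ∈ C, (1 - x e)

/-- Characteristic vector of an edge set, in `ℝ^{Sym2 V}`. -/
noncomputable def charVec (M : Set (Sym2 V)) : Sym2 V → ℝ :=
  fun e => by classical exact if e ∈ M then 1 else 0

/-- The characteristic vectors of multicuts of `G'` lifted from `G`
(the vertex set of the lifted multicut polytope `Ξ_{GG'}`). -/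
def liftedVectors (G G' : SimpleGraph V) : Set (Sym2 V → ℝ) :=
  {x | ∃ M : Set (Sym2 V), IsLiftedMulticut G G' M ∧ x = charVec M}

/-- The characteristic vectors of multicuts of `G'`. -/
def multicutVectors (G' : SimpleGraph V) : Set (Sym2 V → ℝ) :=
  {x | ∃ M : Set (Sym2 V), IsMulticut G' M ∧ x = charVec M}

/-- The inequality `ineq`, with associated equality `eqn`, defines a facet of the
lifted multicut polytope `Ξ_{GG'}` (which has dimension `|E'|`): it is valid, and
the face it induces has dimension `|E'| - 1`. -/
def DefinesFacet (G G' : SimpleGraph V) (ineq eqn : (Sym2 V → ℝ) → Prop) : Prop :=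
  (∀ x ∈ liftedVectors G G', ineq x) ∧
  Module.finrank ℝ (vectorSpan ℝ {x ∈ liftedVectors G G' | eqn x}) = G'.edgeSet.ncard - 1

/-- Facet-defining for the multicut polytope `Ξ_{G'}`. -/
def DefinesFacetMC (G' : SimpleGraph V) (ineq eqn : (Sym2 V → ℝ) → Prop) : Prop :=
  (∀ x ∈ multicutVectors G', ineq x) ∧
  Module.finrank ℝ (vectorSpan ℝ {x ∈ multicutVectors G' | eqn x}) = G'.edgeSet.ncard - 1

/-- `u` is a `v`-`w`-cut-vertex: it lies on every `vw`-path of `G`. -/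
def IsCutVertex (G : SimpleGraph V) (v w u : V) : Prop :=
  ∀ p : G.Walk v w, p.IsPath → u ∈ p.support

/-- `S` is a `u`-`v`-separating node set of `G`. -/
def IsSeparatingSet (G : SimpleGraph V) (u v : V) (S : Set V) : Prop :=
  u ∉ S ∧ v ∉ S ∧ ∀ p : G.Walk u v, p.IsPath → ∃ s ∈ S, s ∈ p.support

/-- The side of the cut `C` containing `v`. -/
def vSide (G : SimpleGraph V) (C : Finset (Sym2 V)) (v : V) : Set V :=
  {u | (G.deleteEdges ↑C).Reachable v u}

/-- The component of `G` induced by `U` is properly `(vw,C)`-connected. -/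
def ProperlyConnected (G : SimpleGraph V) (v w : V) (C : Finset (Sym2 V)) (U : Set V) : Prop :=
  (G.induce U).Connected ∧ v ∈ U ∧ w ∈ U ∧
    ({e | e ∈ C ∧ ∀ u ∈ e, u ∈ U} : Set (Sym2 V)).ncard = 1

/-- The component of `G` induced by `U` is improperly `(vw,C)`-connected. -/
def ImproperlyConnected (G : SimpleGraph V) (v w : V) (C : Finset (Sym2 V)) (U : Set V) : Prop :=
  (G.induce U).Connected ∧ (U ⊆ vSide G C v ∨ U ⊆ vSide G C w)

/-- `(vw,C)`-connected: properly or improperly so. -/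
def VWCConnected (G : SimpleGraph V) (v w : V) (C : Finset (Sym2 V)) (U : Set V) : Prop :=
  ProperlyConnected G v w C U ∨ ImproperlyConnected G v w C U

/-- The vertex set of the maximal component of `H` containing `u`. -/
def compSupp (H : SimpleGraph V) (u : V) : Set V := {u' | H.Reachable u u'}

end Defs

/-! Deleting the cut edges of a decomposition leaves exactly its blocks as connected components,
so a decomposition is determined by its cut edges. A set `M` of edges is a multicut iff no edge
of `M` joins two vertices that remain connected in `G \ M`, since such a path would close a cycle
meeting `M` once; the components of `G \ M` then form a decomposition whose cut edges are `M`. -/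

namespace SimpleGraph

variable {G H : SimpleGraph V}

def componentPartition (H : SimpleGraph V) : Set (Set V) :=
  Set.range (ConnectedComponent.supp (G := H))

lemma isDecomposition_componentPartition (hle : H ≤ G) :
    IsDecomposition G H.componentPartition := by
  refine ⟨?_, fun v => ⟨_, ⟨H.connectedComponentMk v, rfl⟩, rfl⟩, ?_⟩
  · rintro _ ⟨C, rfl⟩ _ ⟨D, rfl⟩ hne
    exact Set.disjoint_left.mpr fun v hC hD => hne (congrArg _ (hC.symm.trans hD))
  · rintro _ ⟨C, rfl⟩
    exact C.maximal_connected_induce_supp.prop.mono fun _ _ hadj => hle hadj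

lemma straddles_componentPartition_iff {a b : V} :
    Straddles H.componentPartition s(a, b) ↔ ¬ H.Reachable a b := by
  simp only [Straddles, componentPartition, Set.forall_mem_range, Sym2.forall_mem_pair,
    ConnectedComponent.mem_supp_iff]
  constructor
  · exact fun h hab => h _ ⟨rfl, (ConnectedComponent.eq.mpr hab).symm⟩
  · rintro h C ⟨rfl, hb⟩
    exact h (ConnectedComponent.eq.mp hb.symm)

lemma isMulticut_iff {M : Set (Sym2 V)} :
    IsMulticut G M ↔
      M ⊆ G.edgeSet ∧ ∀ ⦃a b : V⦄, s(a, b) ∈ M → ¬ (G.deleteEdges M).Reachable a b := by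
  classical
  refine and_congr_right fun hME => ⟨fun hM a b hab hreach => ?_, fun hM u c hc hcard => ?_⟩
  · obtain ⟨q, hq⟩ := hreach.symm.some.toPath
    have hqM : ∀ e ∈ q.edges, e ∉ M := fun e he =>
      ((edgeSet_deleteEdges M ▸ q.edges_subset_edgeSet he) : e ∈ G.edgeSet \ M).2
    have hadj : G.Adj a b := hME hab
    have hcycle : (Walk.cons hadj (q.mapLe (G.deleteEdges_le M))).IsCycle :=
      (Walk.cons_isCycle_iff _ hadj).mpr
        ⟨hq.mapLe _, by rw [Walk.edges_mapLe_eq_edges]; exact fun h => hqM _ h hab⟩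
    refine hM _ hcycle (Set.ncard_eq_one.mpr ⟨s(a, b), ?_⟩)
    ext e
    simp only [Set.mem_inter_iff, Set.mem_ofPred_eq, Walk.edges_cons, Walk.edges_mapLe_eq_edges,
      List.mem_cons, Set.mem_singleton_iff]
    exact ⟨fun ⟨heM, he⟩ => he.resolve_right fun he' => hqM e he' heM,
      fun he => ⟨he ▸ hab, Or.inl he⟩⟩
  · obtain ⟨e, he⟩ := Set.ncard_eq_one.mp hcard
    have heM : e ∈ M ∩ {e | e ∈ c.edges} := he ▸ Set.mem_singleton e
    induction e using Sym2.ind with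
    | _ a b =>
    -- the cycle survives deleting every edge of `M` but `s(a, b)`, and then runs through `s(a, b)`
    have hc' : ∀ e ∈ c.edges, e ∉ M \ {s(a, b)} := fun e hec ⟨heM', hne⟩ =>
      hne (he.subset ⟨heM', hec⟩)
    have hreach := (adj_and_reachable_delete_edges_iff_exists_cycle.mpr
      ⟨u, _, hc.toDeleteEdges _ _ hc', by simpa [Walk.toDeleteEdges] using heM.2⟩).2
    rw [deleteEdges_deleteEdges, Set.sdiff_union_of_subset (Set.singleton_subset_iff.mpr heM.1)]
      at hreach
    exact hM heM.1 hreach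

namespace IsDecomposition

variable {P : Set (Set V)}

lemma eq_of_mem (hP : IsDecomposition G P) {U W : Set V} (hU : U ∈ P) (hW : W ∈ P) {v : V}
    (hvU : v ∈ U) (hvW : v ∈ W) : U = W := by
  by_contra hne
  exact Set.disjoint_left.mp (hP.1 U hU W hW hne) hvU hvW

lemma reachable_deleteEdges_cutEdges_iff (hP : IsDecomposition G P) {u v : V} :
    (G.deleteEdges (cutEdges G P)).Reachable u v ↔ ∃ U ∈ P, u ∈ U ∧ v ∈ U := by
  constructor
  · rintro ⟨p⟩
    obtain ⟨U, hU, huU⟩ := hP.2.1 u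
    refine ⟨U, hU, huU, ?_⟩
    induction p with
    | nil => exact huU
    | @cons a b c hab q ih =>
      obtain ⟨hadj, hnot⟩ := deleteEdges_adj.mp hab
      have hW : ∃ W ∈ P, a ∈ W ∧ b ∈ W := by
        by_contra! h
        exact hnot ⟨hadj, fun W hW hall => h W hW (hall a (by simp)) (hall b (by simp))⟩
      obtain ⟨W, hW, haW, hbW⟩ := hW
      exact ih (hP.eq_of_mem hW hU haW huU ▸ hbW)
  · rintro ⟨U, hU, huU, hvU⟩
    let f : G.induce U →g G.deleteEdges (cutEdges G P) :=
      ⟨Subtype.val, fun {x y} hadj => deleteEdges_adj.mpr ⟨hadj, fun hcut => hcut.2 U hU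
        (Sym2.forall_mem_pair.mpr ⟨x.2, y.2⟩)⟩⟩
    exact ((hP.2.2 U hU).preconnected ⟨u, huU⟩ ⟨v, hvU⟩).map f

lemma supp_connectedComponentMk_deleteEdges_cutEdges (hP : IsDecomposition G P) {U : Set V}
    (hU : U ∈ P) {v : V} (hv : v ∈ U) :
    ((G.deleteEdges (cutEdges G P)).connectedComponentMk v).supp = U := by
  ext u
  rw [ConnectedComponent.mem_supp_iff, ConnectedComponent.eq, reachable_comm,
    hP.reachable_deleteEdges_cutEdges_iff]
  exact ⟨fun ⟨W, hW, hvW, huW⟩ => hP.eq_of_mem hW hU hvW hv ▸ huW, fun hu => ⟨U, hU, hv, hu⟩⟩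

lemma eq_componentPartition (hP : IsDecomposition G P) :
    P = (G.deleteEdges (cutEdges G P)).componentPartition := by
  ext U
  constructor
  · intro hU
    obtain ⟨⟨v, hv⟩⟩ := (hP.2.2 U hU).nonempty
    exact ⟨_, hP.supp_connectedComponentMk_deleteEdges_cutEdges hU hv⟩
  · rintro ⟨C, rfl⟩
    induction C using ConnectedComponent.ind with
    | h v =>
    obtain ⟨U, hU, hvU⟩ := hP.2.1 v
    exact hP.supp_connectedComponentMk_deleteEdges_cutEdges hU hvU ▸ hU

lemma isMulticut_cutEdges (hP : IsDecomposition G P) : IsMulticut G (cutEdges G P) := by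
  refine isMulticut_iff.mpr ⟨fun _ he => he.1, fun a b hab hreach => ?_⟩
  obtain ⟨U, hU, haU, hbU⟩ := hP.reachable_deleteEdges_cutEdges_iff.mp hreach
  exact hab.2 U hU (Sym2.forall_mem_pair.mpr ⟨haU, hbU⟩)

end IsDecomposition

lemma cutEdges_componentPartition_deleteEdges {M : Set (Sym2 V)} (hM : IsMulticut G M) :
    cutEdges G (G.deleteEdges M).componentPartition = M := by
  obtain ⟨hME, hsep⟩ := isMulticut_iff.mp hM
  ext e
  induction e using Sym2.ind with
  | _ a b =>
  simp only [cutEdges, Set.mem_ofPred_eq, straddles_componentPartition_iff]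
  refine ⟨fun ⟨hab, hnreach⟩ => ?_, fun hab => ⟨hME hab, hsep hab⟩⟩
  by_contra habM
  exact hnreach (deleteEdges_adj.mpr ⟨hab, habM⟩).reachable

end SimpleGraph

theorem bijection_decompositions_multicuts_general
    (G : SimpleGraph V) :
    Set.BijOn (cutEdges G) {P | IsDecomposition G P} {M | IsMulticut G M} := by
  refine ⟨fun P hP => hP.isMulticut_cutEdges, fun P hP Q hQ hPQ => ?_, fun M hM =>
    ⟨_, isDecomposition_componentPartition (G.deleteEdges_le M),
      cutEdges_componentPartition_deleteEdges hM⟩⟩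
  calc P = (G.deleteEdges (cutEdges G P)).componentPartition := hP.eq_componentPartition
    _ = (G.deleteEdges (cutEdges G Q)).componentPartition := by rw [hPQ]
    _ = Q := hQ.eq_componentPartition.symm

/-- For every finite simple graph `G`, the map `φ_G` sending a
decomposition `Π` of `G` to the set of edges straddling distinct blocks of `Π`
is a bijection between the decompositions of `G` and the multicuts of `G`. -/
theorem bijection_decompositions_multicuts [Fintype V] [DecidableEq V]
    (G : SimpleGraph V) :
    Set.BijOn (cutEdges G) {P | IsDecomposition G P} {M | IsMulticut G M} :=
  bijection_decompositions_multicuts_general G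
end

section
/- For every graph G = (V,E), a subset M ⊆ E satisfies |C ∩ M| ≠ 1 for every cycle C of G if and only if it satisfies |C ∩ M| ≠ 1 for every chordless cycle C of G. -/
open SimpleGraph

variable {V : Type}

/-!
Induction on the length of the cycle. A chord `e` of a cycle `C` splits its edge set into two
disjoint halves `A` and `B` such that `A + e` and `B + e` are edge sets of shorter cycles. If
`M ∩ C = {m}`, say with `m ∈ A`, then `M ∩ (B + e) = {e}` when `e ∈ M`, and `M ∩ (A + e) = {m}`
otherwise.
-/

namespace Set

theorem ncard_inter_insert_eq_one_or {α : Type*} {M A B : Set α} (e : α) (hAB : Disjoint A B)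
    (h : (M ∩ (A ∪ B)).ncard = 1) :
    (M ∩ insert e A).ncard = 1 ∨ (M ∩ insert e B).ncard = 1 := by
  obtain ⟨m, hm⟩ := ncard_eq_one.mp h
  have hm' : m ∈ M ∩ (A ∪ B) := hm ▸ rfl
  wlog hmA : m ∈ A generalizing A B
  · have hmB : m ∈ B := hm'.2.resolve_left hmA
    exact (this hAB.symm (by rwa [union_comm]) (by rwa [union_comm]) (by rwa [union_comm]) hmB).symm
  have hMB : M ∩ B = ∅ := by
    refine eq_empty_of_forall_notMem fun b hb => ?_
    have hbm : b = m := by rw [← mem_singleton_iff, ← hm]; exact ⟨hb.1, Or.inr hb.2⟩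
    exact hAB.notMem_of_mem_left hmA (hbm ▸ hb.2)
  by_cases he : e ∈ M
  · right
    rw [inter_insert_of_mem he, hMB, insert_empty_eq, ncard_singleton]
  · left
    rwa [inter_insert_of_notMem he, ← union_empty (M ∩ A), ← hMB, ← inter_union_distrib_left]

end Set

namespace SimpleGraph.Walk

variable {G : SimpleGraph V}

theorem IsCycle.exists_shorter_cycles_of_hasChord {u : V} {c : G.Walk u u} (hc : c.IsCycle)
    (hch : HasChord G c) :
    ∃ (e : Sym2 V) (A B : Set (Sym2 V)), Disjoint A B ∧ {e' | e' ∈ c.edges} = A ∪ B ∧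
      (∃ (v : V) (c₁ : G.Walk v v), c₁.IsCycle ∧ c₁.length < c.length ∧
        {e' | e' ∈ c₁.edges} = insert e A) ∧
      (∃ (v : V) (c₂ : G.Walk v v), c₂.IsCycle ∧ c₂.length < c.length ∧
        {e' | e' ∈ c₂.edges} = insert e B) := by
  classical
  obtain ⟨e, he, hsupp, hec⟩ := hch
  induction e using Sym2.ind with | _ x y => ?_
  have hadj : G.Adj x y := he
  have hx : x ∈ c.support := hsupp x (Sym2.mem_mk_left x y)
  have hy : y ∈ (c.rotate x hx).support :=
    (mem_support_rotate_iff c x hx).mpr (hsupp y (Sym2.mem_mk_right x y))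
  have hc' : (c.rotate x hx).IsCycle := hc.rotate hx
  have hedges := (rotate_edges c x hx).perm
  have hlen := length_rotate c x hx
  rw [← take_spec _ hy] at hc' hedges hlen
  set p := (c.rotate x hx).takeUntil y hy
  set q := (c.rotate x hx).dropUntil y hy
  rw [edges_append] at hedges
  rw [length_append] at hlen
  have hp : p.IsPath := hc'.isPath_of_append_left (not_nil_of_ne hadj.ne.symm)
  have hq : q.IsPath := hc'.isPath_of_append_right (not_nil_of_ne hadj.ne)
  have hdisj : p.edges.Disjoint q.edges := by
    have := hc'.edges_nodup
    rw [edges_append] at this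
    exact List.disjoint_of_nodup_append this
  have hxy : s(x, y) ∉ p.edges ++ q.edges := fun h => hec (hedges.mem_iff.mp h)
  rw [List.mem_append, not_or] at hxy
  have hc₁ : (cons hadj.symm p).IsCycle :=
    (cons_isCycle_iff p hadj.symm).mpr ⟨hp, Sym2.eq_swap ▸ hxy.1⟩
  have hc₂ : (cons hadj q).IsCycle := (cons_isCycle_iff q hadj).mpr ⟨hq, hxy.2⟩
  have h₁ := hc₁.three_le_length
  have h₂ := hc₂.three_le_length
  simp only [length_cons] at h₁ h₂
  refine ⟨s(x, y), {e' | e' ∈ p.edges}, {e' | e' ∈ q.edges}, ?_, ?_,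
    ⟨y, _, hc₁, ?_, ?_⟩, ⟨x, _, hc₂, ?_, ?_⟩⟩
  · exact Set.disjoint_left.mpr fun _ h₁ h₂ => hdisj h₁ h₂
  · ext e'; simp [← hedges.mem_iff]
  · simp only [length_cons]; omega
  · ext e'; simp [Sym2.eq_swap]
  · simp only [length_cons]; omega
  · ext e'; simp

end SimpleGraph.Walk

theorem ncard_inter_edges_ne_one_of_chordless (G : SimpleGraph V) (M : Set (Sym2 V))
    (h : ∀ ⦃u : V⦄ (c : G.Walk u u), c.IsCycle → ¬ HasChord G c →
      (M ∩ {e | e ∈ c.edges}).ncard ≠ 1)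
    {u : V} (c : G.Walk u u) (hc : c.IsCycle) : (M ∩ {e | e ∈ c.edges}).ncard ≠ 1 := by
  induction hn : c.length using Nat.strong_induction_on generalizing u with
  | _ n ih =>
  by_cases hch : HasChord G c
  · obtain ⟨e, A, B, hAB, hc_edges, ⟨_, c₁, hc₁, hlen₁, hc₁_edges⟩,
      ⟨_, c₂, hc₂, hlen₂, hc₂_edges⟩⟩ := hc.exists_shorter_cycles_of_hasChord hch
    intro hM
    rw [hc_edges] at hM
    rcases Set.ncard_inter_insert_eq_one_or e hAB hM with hM₁ | hM₂
    · exact ih _ (hn ▸ hlen₁) c₁ hc₁ rfl (hc₁_edges ▸ hM₁)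
    · exact ih _ (hn ▸ hlen₂) c₂ hc₂ rfl (hc₂_edges ▸ hM₂)
  · exact h c hc hch

theorem multicut_iff_chordless_cycles_general
    (G : SimpleGraph V) (M : Set (Sym2 V)) :
    (∀ ⦃u : V⦄ (c : G.Walk u u), c.IsCycle → (M ∩ {e | e ∈ c.edges}).ncard ≠ 1) ↔
    (∀ ⦃u : V⦄ (c : G.Walk u u), c.IsCycle → ¬ HasChord G c →
      (M ∩ {e | e ∈ c.edges}).ncard ≠ 1) :=
  ⟨fun h _ c hc _ => h c hc, fun h _ c hc => ncard_inter_edges_ne_one_of_chordless G M h c hc⟩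

/-- `M ⊆ E` satisfies `|C ∩ M| ≠ 1` for every cycle `C` of `G`
iff it satisfies this for every chordless cycle `C` of `G`. -/
theorem multicut_iff_chordless_cycles [Fintype V] [DecidableEq V]
    (G : SimpleGraph V) (M : Set (Sym2 V)) (hM : M ⊆ G.edgeSet) :
    (∀ ⦃u : V⦄ (c : G.Walk u u), c.IsCycle → (M ∩ {e | e ∈ c.edges}).ncard ≠ 1) ↔
    (∀ ⦃u : V⦄ (c : G.Walk u u), c.IsCycle → ¬ HasChord G c →
      (M ∩ {e | e ∈ c.edges}).ncard ≠ 1) :=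
  multicut_iff_chordless_cycles_general G M
end

section
/- For every finite set V, an edge subset M of the complete graph K_V is a multicut of K_V if and only if every triangle of K_V contains either zero or at least two edges of M (i.e., it suffices to check the multicut condition on cycles of length 3). -/
open SimpleGraph

variable {V : Type}

lemma aux_walk {V : Type} [Fintype V] [DecidableEq V]
    (M : Set (Sym2 V))
    (hT : ∀ u v w : V, u ≠ v → v ≠ w → u ≠ w →
      (M ∩ {s(u, v), s(v, w), s(u, w)}).ncard ≠ 1) :
    ∀ {a b : V} (p : (⊤ : SimpleGraph V).Walk a b), p.IsTrail →
      ((M ∩ {e | e ∈ p.edges}).ncard = 0 → a = b ∨ s(a, b) ∉ M) ∧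
      ((M ∩ {e | e ∈ p.edges}).ncard = 1 → a ≠ b ∧ s(a, b) ∈ M) := by
  intro a b p
  induction p with
  | nil =>
    intro _
    constructor
    · intro _; exact Or.inl rfl
    · intro h1; exfalso; revert h1; simp
  | @cons a c b h q ih =>
    intro ht
    have htq : q.IsTrail := ht.of_cons
    have hfq : s(a, c) ∉ q.edges := by
      have := ht.edges_nodup
      simp only [SimpleGraph.Walk.edges_cons, List.nodup_cons] at this
      exact this.1
    have hac : a ≠ c := h.ne
    have hset : {e | e ∈ (SimpleGraph.Walk.cons h q).edges}
        = insert s(a, c) {e | e ∈ q.edges} := by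
      ext e; simp
    have hfS : s(a, c) ∉ M ∩ {e | e ∈ q.edges} := fun hx => hfq hx.2
    by_cases hfM : s(a, c) ∈ M
    · have hcard : (M ∩ {e | e ∈ (SimpleGraph.Walk.cons h q).edges}).ncard
          = (M ∩ {e | e ∈ q.edges}).ncard + 1 := by
        rw [hset, Set.inter_insert_of_mem hfM,
          Set.ncard_insert_of_notMem hfS (Set.toFinite _)]
      constructor
      · intro h0; omega
      · intro h1
        have hS0 : (M ∩ {e | e ∈ q.edges}).ncard = 0 := by omega
        rcases eq_or_ne c b with rfl | hcb
        · exact ⟨hac, hfM⟩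
        · have hcbM : s(c, b) ∉ M := ((ih htq).1 hS0).resolve_left hcb
          have hab : a ≠ b := by
            rintro rfl
            exact hcbM (by rwa [Sym2.eq_swap])
          refine ⟨hab, ?_⟩
          by_contra habM
          apply hT a c b hac hcb hab
          have : M ∩ {s(a, c), s(c, b), s(a, b)} = {s(a, c)} := by
            ext e
            simp only [Set.mem_inter_iff, Set.mem_insert_iff, Set.mem_singleton_iff]
            constructor
            · rintro ⟨heM, rfl | rfl | rfl⟩
              · rfl
              · exact absurd heM hcbM
              · exact absurd heM habM
            · rintro rfl; exact ⟨hfM, Or.inl rfl⟩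
          rw [this, Set.ncard_singleton]
    · have hcard : (M ∩ {e | e ∈ (SimpleGraph.Walk.cons h q).edges}).ncard
          = (M ∩ {e | e ∈ q.edges}).ncard := by
        rw [hset, Set.inter_insert_of_notMem hfM]
      constructor
      · intro h0
        rcases eq_or_ne a b with rfl | hab
        · exact Or.inl rfl
        right
        rcases eq_or_ne c b with rfl | hcb
        · exact hfM
        · have hcbM : s(c, b) ∉ M := ((ih htq).1 (by omega)).resolve_left hcb
          by_contra habM
          apply hT a c b hac hcb hab
          have : M ∩ {s(a, c), s(c, b), s(a, b)} = {s(a, b)} := by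
            ext e
            simp only [Set.mem_inter_iff, Set.mem_insert_iff, Set.mem_singleton_iff]
            constructor
            · rintro ⟨heM, rfl | rfl | rfl⟩
              · exact absurd heM hfM
              · exact absurd heM hcbM
              · rfl
            · rintro rfl; exact ⟨habM, Or.inr (Or.inr rfl)⟩
          rw [this, Set.ncard_singleton]
      · intro h1
        obtain ⟨hcb, hcbM⟩ := (ih htq).2 (by omega)
        have hab : a ≠ b := by
          rintro rfl
          exact hfM (by rwa [Sym2.eq_swap] at hcbM)
        refine ⟨hab, ?_⟩
        by_contra habM
        apply hT a c b hac hcb hab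
        have : M ∩ {s(a, c), s(c, b), s(a, b)} = {s(c, b)} := by
          ext e
          simp only [Set.mem_inter_iff, Set.mem_insert_iff, Set.mem_singleton_iff]
          constructor
          · rintro ⟨heM, rfl | rfl | rfl⟩
            · exact absurd heM hfM
            · rfl
            · exact absurd heM habM
          · rintro rfl; exact ⟨hcbM, Or.inr (Or.inl rfl)⟩
        rw [this, Set.ncard_singleton]


/-- An edge set `M` of the complete graph `K_V` is a multicut of
`K_V` iff every triangle of `K_V` contains either zero or at least two edges of `M`. -/
theorem multicut_complete_iff_triangles (V : Type) [Fintype V] [DecidableEq V]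
    (M : Set (Sym2 V)) (hM : M ⊆ (⊤ : SimpleGraph V).edgeSet) :
    IsMulticut (⊤ : SimpleGraph V) M ↔
      ∀ u v w : V, u ≠ v → v ≠ w → u ≠ w →
        (M ∩ {s(u, v), s(v, w), s(u, w)}).ncard ≠ 1 := by
  
  unfold IsMulticut
  constructor
  · rintro ⟨-, hMc⟩ u v w huv hvw huw
    have hwu : (⊤ : SimpleGraph V).Adj w u := by simp [Ne.symm huw]
    have hvwadj : (⊤ : SimpleGraph V).Adj v w := by simp [hvw]
    have huvadj : (⊤ : SimpleGraph V).Adj u v := by simp [huv]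
    set t : (⊤ : SimpleGraph V).Walk u u :=
      SimpleGraph.Walk.cons huvadj (SimpleGraph.Walk.cons hvwadj
        (SimpleGraph.Walk.cons hwu SimpleGraph.Walk.nil)) with ht
    have hcyc : t.IsCycle := by
      rw [SimpleGraph.Walk.isCycle_def, SimpleGraph.Walk.isTrail_def]
      refine ⟨?_, by simp [ht], ?_⟩
      · simp [ht, Sym2.eq_iff]
        push_neg
        exact ⟨⟨⟨fun _ => hvw, huw⟩, fun _ => Ne.symm huv, hvw⟩,
          fun _ => Ne.symm huw, Ne.symm huv⟩
      · simp [ht, hvw, Ne.symm huv, Ne.symm huw]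
    have hkey := hMc t hcyc
    have hedges : {e | e ∈ t.edges} = {s(u, v), s(v, w), s(u, w)} := by
      have : t.edges = [s(u, v), s(v, w), s(u, w)] := by
        simp [ht]
      rw [this]
      ext e; simp
    rwa [hedges] at hkey
  · intro hT
    refine ⟨hM, ?_⟩
    intro u c hc h1
    exact ((aux_walk M hT c hc.isTrail).2 h1).1 rfl
end

section
/- Let G = (V,E) be a connected graph and G' = (V,E') a graph with E ⊆ E'. For x ∈ {0,1}^{E'}, the set x^{-1}(1) is a multicut of G' lifted from G (i.e., it equals φ_{G'}(Π) for some decomposition Π of G) if and only if: (1) for every cycle C of G and every e ∈ C, x_e ≤ Σ_{e' ∈ C\{e}} x_{e'}; (2) for every vw ∈ E' \ E and every vw-path P in G, x_{vw} ≤ Σ_{e ∈ P} x_e; and (3) for every vw ∈ E' \ E and every vw-cut C of G, 1 − x_{vw} ≤ Σ_{e ∈ C} (1 − x_e). -/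
open SimpleGraph

variable {V : Type}

/-!
Write `M = x⁻¹(1)` and `R(a, b)` for reachability of `b` from `a` in `G \ M`. A set `M ⊆ E'` is a
lifted multicut iff it is the lift of the decomposition of `G` into the components of `G \ M`,
i.e. iff for every `ab ∈ E'` we have `ab ∈ M ↔ ¬ R(a, b)`. For `ab ∈ E` the implication `→` is
exactly the cycle inequalities (an `M`-edge closing a path of `G \ M` is a cycle meeting `M` once)
and `←` is automatic. For `ab ∈ E' \ E`, `→` says that `M` meets every `ab`-path of `G`, which
is the path inequalities, and `←` says that `M` contains an `ab`-cut of `G` whenever it separates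
`a` from `b`, which is the cut inequalities.
-/

section Partitions

variable {G G' H : SimpleGraph V} {P : Set (Set V)} {M : Set (Sym2 V)} {a b : V}

theorem straddles_mk_iff : Straddles P s(a, b) ↔ ∀ U ∈ P, a ∈ U → b ∉ U := by
  simp [Straddles]

theorem exists_straddles_of_walk (hdisj : ∀ U ∈ P, ∀ W ∈ P, U ≠ W → Disjoint U W)
    (hcover : ∀ v, ∃ U ∈ P, v ∈ U) (p : H.Walk a b) (hab : Straddles P s(a, b)) :
    ∃ e ∈ p.edges, Straddles P e := by
  obtain ⟨U, hU, haU⟩ := hcover a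
  obtain ⟨d, hd, hfst, hsnd⟩ := p.exists_boundary_dart U haU (straddles_mk_iff.1 hab U hU haU)
  refine ⟨d.edge, List.mem_map_of_mem hd, straddles_mk_iff.2 fun W hW hfstW hsndW => ?_⟩
  have hUW : U ≠ W := by rintro rfl; exact hsnd hsndW
  exact Set.disjoint_left.1 (hdisj U hU W hW hUW) hfst hfstW

theorem reachable_deleteEdges_cutEdges_iff (hP : IsDecomposition G P) (hle : G ≤ G') :
    (G.deleteEdges (cutEdges G' P)).Reachable a b ↔ ¬ Straddles P s(a, b) := by
  constructor
  · rintro ⟨p⟩ hab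
    obtain ⟨e, he, hstr⟩ := exists_straddles_of_walk hP.1 hP.2.1 p hab
    obtain ⟨heG, hecut⟩ := (edgeSet_deleteEdges _ ▸ p.edges_subset_edgeSet he :)
    exact hecut ⟨edgeSet_mono hle heG, hstr⟩
  · intro hab
    obtain ⟨U, hU, habU⟩ : ∃ U ∈ P, ∀ v ∈ s(a, b), v ∈ U := by simpa [Straddles] using hab
    have haU := habU a (Sym2.mem_mk_left a b)
    have hbU := habU b (Sym2.mem_mk_right a b)
    let f : G.induce U →g G.deleteEdges (cutEdges G' P) :=
      ⟨Subtype.val, fun {u v} huv =>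
        (deleteEdges_adj ..).2 ⟨huv, fun hcut => hcut.2 U hU (by simp)⟩⟩
    exact ((hP.2.2 U hU).preconnected ⟨a, haU⟩ ⟨b, hbU⟩).map f

theorem isDecomposition_range_supp (hle : H ≤ G) :
    IsDecomposition G (Set.range (ConnectedComponent.supp : H.ConnectedComponent → Set V)) := by
  refine ⟨?_, fun v => ⟨_, ⟨H.connectedComponentMk v, rfl⟩, rfl⟩, ?_⟩
  · rintro _ ⟨c, rfl⟩ _ ⟨c', rfl⟩ hne
    exact H.pairwise_disjoint_supp_connectedComponent (ne_of_apply_ne _ hne)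
  · rintro _ ⟨c, rfl⟩
    exact c.connected_toSimpleGraph.mono fun _ _ h => hle h

theorem straddles_range_supp_iff :
    Straddles (Set.range (ConnectedComponent.supp : H.ConnectedComponent → Set V)) s(a, b) ↔
      ¬ H.Reachable a b := by
  simp [straddles_mk_iff, ConnectedComponent.mem_supp_iff, ← ConnectedComponent.eq, eq_comm]

theorem isLiftedMulticut_iff (hle : G ≤ G') :
    IsLiftedMulticut G G' M ↔ M ⊆ G'.edgeSet ∧
      ∀ ⦃a b⦄, s(a, b) ∈ G'.edgeSet → (s(a, b) ∈ M ↔ ¬ (G.deleteEdges M).Reachable a b) := by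
  constructor
  · rintro ⟨P, hP, rfl⟩
    refine ⟨fun e he => he.1, fun a b hab => ?_⟩
    rw [reachable_deleteEdges_cutEdges_iff hP hle, not_not]
    simp [cutEdges, hab]
  · rintro ⟨hMG', hM⟩
    refine ⟨_, isDecomposition_range_supp (G.deleteEdges_le M), Set.ext fun e => ?_⟩
    induction e using Sym2.ind with
    | _ a b =>
      simp only [cutEdges, Set.mem_ofPred_eq, straddles_range_supp_iff]
      exact ⟨fun he => ⟨hMG' he, (hM (hMG' he)).1 he⟩, fun ⟨hab, hr⟩ => (hM hab).2 hr⟩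

end Partitions

namespace SimpleGraph

variable {G : SimpleGraph V} {M : Set (Sym2 V)} {a b : V}

theorem exists_isPath_forall_notMem_of_reachable_deleteEdges [DecidableEq V]
    (h : (G.deleteEdges M).Reachable a b) :
    ∃ p : G.Walk a b, p.IsPath ∧ ∀ e ∈ p.edges, e ∉ M := by
  obtain ⟨q⟩ := h
  refine ⟨q.bypass.mapLe (G.deleteEdges_le M), q.bypass_isPath.mapLe _, fun e he => ?_⟩
  rw [Walk.edges_mapLe_eq_edges] at he
  exact (edgeSet_deleteEdges M ▸ q.bypass.edges_subset_edgeSet he :).2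

theorem forall_isCycle_exists_ne_mem_iff [DecidableEq V] :
    (∀ ⦃u⦄ (c : G.Walk u u), c.IsCycle → ∀ e ∈ c.edges, e ∈ M → ∃ f ∈ c.edges, f ≠ e ∧ f ∈ M) ↔
      ∀ ⦃a b⦄, G.Adj a b → s(a, b) ∈ M → ¬ (G.deleteEdges M).Reachable a b := by
  constructor
  · intro h a b hab habM hr
    obtain ⟨p, hp, hpM⟩ := exists_isPath_forall_notMem_of_reachable_deleteEdges hr
    have hc : (Walk.cons hab p.reverse).IsCycle :=
      (Walk.cons_isCycle_iff _ _).2 ⟨hp.reverse, fun he => hpM _ (by simpa using he) habM⟩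
    obtain ⟨f, hf, hfne, hfM⟩ := h _ hc s(a, b) (by simp) habM
    simp only [Walk.edges_cons, Walk.edges_reverse, List.mem_cons, List.mem_reverse] at hf
    exact hf.elim hfne (hpM f · hfM)
  · intro h u c hc e he heM
    by_contra! hrest
    induction e using Sym2.ind with
    | _ a b =>
      -- `c` survives in `G \ (M \ {ab})`, so `ab` is not a bridge there.
      have hK : ∀ f ∈ c.edges, f ∈ (G.deleteEdges (M \ {s(a, b)})).edgeSet := fun f hf => by
        rw [edgeSet_deleteEdges]
        exact ⟨c.edges_subset_edgeSet hf, fun hfM => hrest f hf hfM.2 hfM.1⟩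
      have hr := (adj_and_reachable_delete_edges_iff_exists_cycle.2
        ⟨_, _, hc.transfer hK, by rwa [Walk.edges_transfer]⟩).2
      rw [deleteEdges_deleteEdges] at hr
      exact h (c.adj_of_mem_edges he) heM (hr.mono (deleteEdges_anti (Set.subset_sdiff_union _ _)))

theorem forall_isPath_exists_mem_iff [DecidableEq V] :
    (∀ p : G.Walk a b, p.IsPath → ∃ e ∈ p.edges, e ∈ M) ↔ ¬ (G.deleteEdges M).Reachable a b := by
  constructor
  · intro h hr
    obtain ⟨p, hp, hpM⟩ := exists_isPath_forall_notMem_of_reachable_deleteEdges hr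
    obtain ⟨e, he, heM⟩ := h p hp
    exact hpM e he heM
  · intro h p hp
    by_contra! hpM
    exact h ⟨p.toDeleteEdges M hpM⟩

theorem exists_isCut_subset {D : Finset (Sym2 V)} (hD : ↑D ⊆ G.edgeSet)
    (h : ¬ (G.deleteEdges ↑D).Reachable a b) : ∃ C ⊆ D, IsCut G a b C := by
  induction D using Finset.strongInduction with
  | H D ih =>
    by_cases hmin : ∀ C ⊂ D, (G.deleteEdges ↑C).Reachable a b
    · exact ⟨D, subset_rfl, hD, h, hmin⟩
    push Not at hmin
    obtain ⟨C', hC'D, hC'⟩ := hmin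
    obtain ⟨C, hCC', hC⟩ := ih C' hC'D ((Finset.coe_subset.2 hC'D.subset).trans hD) hC'
    exact ⟨C, hCC'.trans hC'D.subset, hC⟩

theorem forall_isCut_exists_notMem_iff [Finite V] :
    (∀ C, IsCut G a b C → ∃ e ∈ C, e ∉ M) ↔ (G.deleteEdges M).Reachable a b := by
  constructor
  · intro h
    by_contra hr
    let D := (Set.toFinite (M ∩ G.edgeSet)).toFinset
    obtain ⟨C, hCD, hC⟩ := exists_isCut_subset (G := G) (D := D) (by simp [D])
      (by rwa [Set.Finite.coe_toFinset, ← deleteEdges_eq_inter_edgeSet])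
    obtain ⟨e, he, heM⟩ := h C hC
    have heD : e ∈ M ∩ G.edgeSet := by simpa [D] using hCD he
    exact heM heD.1
  · intro hr C hC
    by_contra! hCM
    exact hC.2.1 (hr.mono (deleteEdges_anti hCM))

end SimpleGraph

section Inequalities

variable {ι : Type*} {s : Finset ι} {y : ι → ℕ}

theorem le_sum_iff_of_zero_or_one (hy : ∀ i, y i = 0 ∨ y i = 1) (j : ι) :
    y j ≤ ∑ i ∈ s, y i ↔ (y j = 1 → ∃ i ∈ s, y i = 1) := by
  constructor
  · intro h hj
    obtain ⟨i, hi, hyi⟩ := Finset.exists_ne_zero_of_sum_ne_zero (s := s) (f := y) (by omega)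
    exact ⟨i, hi, (hy i).resolve_left hyi⟩
  · intro h
    rcases hy j with hj | hj
    · simp [hj]
    obtain ⟨i, hi, hyi⟩ := h hj
    rw [hj, ← hyi]
    exact Finset.single_le_sum (fun _ _ => Nat.zero_le _) hi

theorem one_sub_le_sum_one_sub_iff (hy : ∀ i, y i = 0 ∨ y i = 1) (j : ι) :
    1 - y j ≤ ∑ i ∈ s, (1 - y i) ↔ (y j = 0 → ∃ i ∈ s, y i = 0) := by
  have hsub : ∀ i, 1 - y i = 1 ↔ y i = 0 := fun i => by omega
  simpa only [hsub] using
    le_sum_iff_of_zero_or_one (y := fun i => 1 - y i) (fun i => by rcases hy i with h | h <;> simp [h]) j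

variable {G G' : SimpleGraph V} {x : Sym2 V → ℕ}

theorem cycleIneqs_iff [DecidableEq V] (h01 : ∀ e, x e = 0 ∨ x e = 1) :
    CycleIneqs G x ↔ ∀ ⦃a b⦄, G.Adj a b → x s(a, b) = 1 →
      ¬ (G.deleteEdges {e | x e = 1}).Reachable a b := by
  refine Iff.trans ?_ (forall_isCycle_exists_ne_mem_iff (M := {e | x e = 1}))
  simp only [CycleIneqs, le_sum_iff_of_zero_or_one h01, Finset.mem_erase, List.mem_toFinset,
    Set.mem_ofPred_eq, and_comm (a := _ ≠ _), and_assoc]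

theorem pathIneqs_iff [DecidableEq V] (h01 : ∀ e, x e = 0 ∨ x e = 1) :
    PathIneqs G G' x ↔ ∀ ⦃a b⦄, s(a, b) ∈ G'.edgeSet \ G.edgeSet → x s(a, b) = 1 →
      ¬ (G.deleteEdges {e | x e = 1}).Reachable a b := by
  refine forall₂_congr fun a b => imp_congr_right fun _ => ?_
  rw [← forall_isPath_exists_mem_iff]
  simp only [le_sum_iff_of_zero_or_one h01, List.mem_toFinset, Set.mem_ofPred_eq]
  exact ⟨fun h hx p hp => h p hp hx, fun h p hp hx => h hx p hp⟩

theorem cutIneqs_iff [Finite V] (h01 : ∀ e, x e = 0 ∨ x e = 1) :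
    CutIneqs G G' x ↔ ∀ ⦃a b⦄, s(a, b) ∈ G'.edgeSet \ G.edgeSet →
      ¬ (G.deleteEdges {e | x e = 1}).Reachable a b → x s(a, b) = 1 := by
  refine forall₂_congr fun a b => imp_congr_right fun _ => ?_
  have hne : ∀ e, x e = 0 ↔ ¬ x e = 1 := fun e => by rcases h01 e with h | h <;> simp [h]
  rw [← forall_isCut_exists_notMem_iff]
  simp only [one_sub_le_sum_one_sub_iff h01, hne, Set.mem_ofPred_eq, not_imp_comm]
  exact ⟨fun h hx C hC => h C hC hx, fun h C hC hx => h hx C hC⟩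

end Inequalities

theorem lifted_multicut_iff_inequalities_general [Fintype V] [DecidableEq V]
    (G G' : SimpleGraph V) (hle : G ≤ G')
    (x : Sym2 V → ℕ) (h01 : ∀ e, x e = 0 ∨ x e = 1)
    (hsupp : ∀ e ∉ G'.edgeSet, x e = 0) :
    IsLiftedMulticut G G' {e | x e = 1} ↔
      (CycleIneqs G x ∧ PathIneqs G G' x ∧ CutIneqs G G' x) := by
  rw [isLiftedMulticut_iff hle, cycleIneqs_iff h01, pathIneqs_iff h01, cutIneqs_iff h01]
  have hsub : {e | x e = 1} ⊆ G'.edgeSet := fun e he =>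
    by_contra fun h => absurd he (by simp [hsupp e h])
  constructor
  · rintro ⟨-, hM⟩
    exact ⟨fun a b hab => (hM (hle hab)).1, fun a b hab => (hM hab.1).1,
      fun a b hab => (hM hab.1).2⟩
  · rintro ⟨hcycle, hpath, hcut⟩
    refine ⟨hsub, fun a b hab => ?_⟩
    by_cases hG : s(a, b) ∈ G.edgeSet
    · refine ⟨hcycle hG, fun hr => by_contra fun hx => hr ?_⟩
      exact ((deleteEdges_adj ..).2 ⟨hG, hx⟩).reachable
    · exact ⟨hpath ⟨hab, hG⟩, hcut ⟨hab, hG⟩⟩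

/-- For connected `G` and `G' ⊇ G`, `x⁻¹(1)` is a multicut of `G'`
lifted from `G` iff `x` satisfies the cycle, path and cut inequalities. -/
theorem lifted_multicut_iff_inequalities [Fintype V] [DecidableEq V]
    (G G' : SimpleGraph V) (hG : G.Connected) (hle : G ≤ G')
    (x : Sym2 V → ℕ) (h01 : ∀ e, x e = 0 ∨ x e = 1)
    (hsupp : ∀ e ∉ G'.edgeSet, x e = 0) :
    IsLiftedMulticut G G' {e | x e = 1} ↔
      (CycleIneqs G x ∧ PathIneqs G G' x ∧ CutIneqs G G' x) :=
  lifted_multicut_iff_inequalities_general G G' hle x h01 hsupp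
end

section
/- Let G = (V,E) be a connected graph, G' = (V,E') with E ⊆ E', and set F = E' \ E. Define the hierarchy (F_n) by F_0 = ∅ and {v,w} ∈ F_n iff there exists a vw-path in G such that any two distinct nodes v', w' on the path with {v',w'} ≠ {v,w} satisfy {v',w'} ∉ F or {v',w'} ∈ F_j for some j < n. Then for every f ∈ F there exists n ∈ ℕ with f ∈ F_n. -/
open SimpleGraph

variable {V : Type}

/-- The hierarchy `(F_n)` of `F = E' \ E` with respect to `G`:
`F_0 = ∅`, and `{v,w} ∈ F_n` (for `n ≥ 1`) iff there is a `vw`-path in `G` such that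
any two distinct nodes `v', w'` on the path with `{v',w'} ≠ {v,w}` satisfy
`{v',w'} ∉ F` or `{v',w'} ∈ F_j` for some `j < n`. -/
def hier [DecidableEq V] (G : SimpleGraph V) (F : Set (Sym2 V)) : ℕ → Set (Sym2 V)
  | 0 => ∅
  | n + 1 =>
    {f | ∃ v w : V, f = s(v, w) ∧ ∃ p : G.Walk v w, p.IsPath ∧
      ∀ v' ∈ p.support, ∀ w' ∈ p.support, v' ≠ w' → s(v', w') ≠ f →
        s(v', w') ∉ F ∨ ∃ j, ∃ _ : j < n + 1, s(v', w') ∈ hier G F j}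

lemma exists_shorter_subpath {G : SimpleGraph V} {v w : V} {p : G.Walk v w}
    (hp : p.IsPath) {v' w' : V} (hv' : v' ∈ p.support) (hw' : w' ∈ p.support)
    (hne : s(v', w') ≠ s(v, w)) :
    ∃ a b, s(v', w') = s(a, b) ∧ ∃ q : G.Walk a b, q.IsPath ∧ q.length < p.length := by
  classical
  set t := p.takeUntil v' hv' with ht
  set d := p.dropUntil v' hv' with hd
  have hspec : t.append d = p := p.take_spec hv'
  have hlen : t.length + d.length = p.length := by
    have := congrArg SimpleGraph.Walk.length hspec
    simpa [SimpleGraph.Walk.length_append] using this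
  have hw'' : w' ∈ t.support ∨ w' ∈ d.support := by
    rw [← SimpleGraph.Walk.mem_support_append_iff, hspec]; exact hw'
  rcases hw'' with hw1 | hw2
  · -- w' comes before v' : subpath from w' to v'
    refine ⟨w', v', Sym2.eq_swap, t.dropUntil w' hw1, (hp.takeUntil hv').dropUntil hw1, ?_⟩
    have hlen2 : (t.takeUntil w' hw1).length + (t.dropUntil w' hw1).length = t.length := by
      have h := congrArg SimpleGraph.Walk.length (t.take_spec hw1)
      rw [SimpleGraph.Walk.length_append] at h
      exact h
    by_contra hge
    push_neg at hge
    have h1 : d.length = 0 := by omega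
    have h2 : (t.takeUntil w' hw1).length = 0 := by omega
    have hvw : v' = w := SimpleGraph.Walk.eq_of_length_eq_zero h1
    have hvw' : v = w' := SimpleGraph.Walk.eq_of_length_eq_zero h2
    exact hne (by rw [← hvw, ← hvw', Sym2.eq_swap])
  · -- v' comes before w' : subpath from v' to w'
    refine ⟨v', w', rfl, d.takeUntil w' hw2, (hp.dropUntil hv').takeUntil hw2, ?_⟩
    have hlen2 : (d.takeUntil w' hw2).length + (d.dropUntil w' hw2).length = d.length := by
      have h := congrArg SimpleGraph.Walk.length (d.take_spec hw2)
      rw [SimpleGraph.Walk.length_append] at h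
      exact h
    by_contra hge
    push_neg at hge
    have h1 : t.length = 0 := by omega
    have h2 : (d.dropUntil w' hw2).length = 0 := by omega
    have hvv : v = v' := SimpleGraph.Walk.eq_of_length_eq_zero h1
    have hww : w' = w := SimpleGraph.Walk.eq_of_length_eq_zero h2
    exact hne (by rw [← hvv, hww])

lemma mem_hier_of_path [DecidableEq V] {G : SimpleGraph V} (F : Set (Sym2 V)) :
    ∀ L : ℕ, ∀ v w : V, ∀ p : G.Walk v w, p.IsPath → p.length < L →
      s(v, w) ∈ hier G F L := by
  intro L
  induction L with
  | zero => intro v w p _ h; omega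
  | succ L ih =>
    intro v w p hp hlen
    simp only [hier, Set.mem_setOf_eq]
    refine ⟨v, w, rfl, p, hp, ?_⟩
    intro v' hv' w' hw' hvw' hnef
    right
    obtain ⟨a, b, hab, q, hq, hqlen⟩ := exists_shorter_subpath hp hv' hw' hnef
    exact ⟨L, Nat.lt_succ_self L, hab ▸ ih a b q hq (by omega)⟩

/-- Every `f ∈ F = E' \ E` lies in some level `F_n` of the hierarchy. -/
theorem hierarchy_exhausts [Fintype V] [DecidableEq V]
    (G G' : SimpleGraph V) (hG : G.Connected) (hle : G ≤ G')
    (f : Sym2 V) (hf : f ∈ G'.edgeSet \ G.edgeSet) :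
    ∃ n : ℕ, f ∈ hier G (G'.edgeSet \ G.edgeSet) n := by
  induction f with
  | _ v w =>
    obtain ⟨q⟩ := hG.preconnected v w
    exact ⟨q.toPath.1.length + 1,
      mem_hier_of_path _ _ v w q.toPath.1 q.toPath.2 (Nat.lt_succ_self _)⟩
end

section
/- Let G = (V,E) be a connected graph and G' = (V,E') with E ⊆ E'. For every {v,w} = f ∈ E' \ E, let P be a shortest vw-path in G, and define x ∈ {0,1}^{E'} by x_e = 0 for edges e of P, x_e = 0 for every pair {v',w'} ∈ E' \ E with both endpoints on P, and x_e = 1 for all other edges of E'. Then x^{-1}(1) is a multicut of G' lifted from G; in particular x_f = 0 and x_{f'} = 1 for every f' ∈ E' \ E with at least one endpoint off P. -/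
open SimpleGraph

variable {V : Type}

lemma edge_mem_of_length_le_one {G : SimpleGraph V} {a b : V} (q : G.Walk a b)
    (hne : a ≠ b) (h : q.length ≤ 1) : s(a, b) ∈ q.edges := by
  cases q with
  | nil => exact absurd rfl hne
  | cons h' q' =>
    cases q' with
    | nil => simp
    | cons h'' q'' => simp [SimpleGraph.Walk.length_cons] at h

lemma chord_mem {G : SimpleGraph V} {v w : V} (p : G.Walk v w)
    (hshort : ∀ q : G.Walk v w, p.length ≤ q.length)
    {a b : V} (hadj : G.Adj a b) (ha : a ∈ p.support) (hb : b ∈ p.support) :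
    s(a, b) ∈ p.edges := by
  by_contra hne
  obtain ⟨q, r, rfl⟩ := SimpleGraph.Walk.mem_support_iff_exists_append.mp hb
  rw [SimpleGraph.Walk.mem_support_append_iff] at ha
  cases ha with
  | inl ha =>
    obtain ⟨q1, q2, rfl⟩ := SimpleGraph.Walk.mem_support_iff_exists_append.mp ha
    have h1 := hshort (q1.append (Walk.cons hadj r))
    simp only [SimpleGraph.Walk.length_append, SimpleGraph.Walk.length_cons] at h1
    have h2 : q2.length ≤ 1 := by omega
    have := edge_mem_of_length_le_one q2 hadj.ne h2
    simp only [SimpleGraph.Walk.edges_append, List.mem_append] at hne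
    exact hne (Or.inl (Or.inr this))
  | inr ha =>
    obtain ⟨r1, r2, rfl⟩ := SimpleGraph.Walk.mem_support_iff_exists_append.mp ha
    have h1 := hshort (q.append (Walk.cons hadj.symm r2))
    simp only [SimpleGraph.Walk.length_append, SimpleGraph.Walk.length_cons] at h1
    have h2 : r1.length ≤ 1 := by omega
    have := edge_mem_of_length_le_one r1 hadj.ne.symm h2
    simp only [SimpleGraph.Walk.edges_append, List.mem_append] at hne
    rw [Sym2.eq_swap] at hne
    exact hne (Or.inr (Or.inl this))

lemma induce_singleton_connected (G : SimpleGraph V) (u : V) :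
    (G.induce {u}).Connected := by
  rw [SimpleGraph.connected_iff]
  refine ⟨fun x y => ?_, ⟨⟨u, rfl⟩⟩⟩
  have : x = y := Subtype.ext (x.2.trans y.2.symm)
  rw [this]

lemma induce_support_connected {G : SimpleGraph V} {v w : V} (p : G.Walk v w) :
    (G.induce {u | u ∈ p.support}).Connected := by
  rw [SimpleGraph.connected_induce_iff]
  refine p.toSubgraph_connected.mono ?_ ?_
  · constructor
    · rw [p.verts_toSubgraph]; exact fun x hx => hx
    · intro a b hab
      rw [SimpleGraph.Subgraph.induce_adj]
      exact ⟨p.mem_verts_toSubgraph.mp (p.toSubgraph.edge_vert hab),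
        p.mem_verts_toSubgraph.mp (p.toSubgraph.edge_vert hab.symm),
        p.toSubgraph.adj_sub hab⟩
  · rw [p.verts_toSubgraph]; rfl

/-- For `f = {v,w} ∈ E' \ E` and a shortest `vw`-path `P` of `G`,
the vector `x` that is `0` exactly on the edges of `P` and on the pairs of `E' \ E`
with both endpoints on `P` (and `1` on all other edges of `E'`) encodes a multicut
of `G'` lifted from `G`; in particular `x f = 0` and `x f' = 1` for every
`f' ∈ E' \ E` with an endpoint off `P`. -/
theorem shortest_path_vector_is_lifted_multicut [Fintype V] [DecidableEq V]
    (G G' : SimpleGraph V) (hG : G.Connected) (hle : G ≤ G')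
    (v w : V) (hf : s(v, w) ∈ G'.edgeSet \ G.edgeSet)
    (p : G.Walk v w) (hp : p.IsPath) (hshort : ∀ q : G.Walk v w, p.length ≤ q.length)
    (x : Sym2 V → ℕ) (h01 : ∀ e, x e = 0 ∨ x e = 1)
    (hsupp : ∀ e ∉ G'.edgeSet, x e = 0)
    (hxE : ∀ e ∈ G.edgeSet, (x e = 0 ↔ e ∈ p.edges))
    (hxF : ∀ e ∈ G'.edgeSet \ G.edgeSet, (x e = 0 ↔ ∀ u ∈ e, u ∈ p.support)) :
    IsLiftedMulticut G G' {e | x e = 1} ∧ x s(v, w) = 0 ∧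
      ∀ f' ∈ G'.edgeSet \ G.edgeSet, (∃ u ∈ f', u ∉ p.support) → x f' = 1 := by
  classical
  set S : Set V := {u | u ∈ p.support} with hS
  have hvS : v ∈ S := p.start_mem_support
  have hwS : w ∈ S := p.end_mem_support
  have key : ∀ e ∈ G'.edgeSet, (x e = 1 ↔ ¬ ∀ u ∈ e, u ∈ S) := by
    intro e he'
    constructor
    · intro hx1 hall
      by_cases heG : e ∈ G.edgeSet
      · have hmem : e ∈ p.edges := by
          induction e using Sym2.ind with
          | _ a b =>
            exact chord_mem p hshort (G.mem_edgeSet.mp heG)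
              (hall a (Sym2.mem_mk_left a b)) (hall b (Sym2.mem_mk_right a b))
        have h0 := (hxE e heG).mpr hmem
        omega
      · have h0 := (hxF e ⟨he', heG⟩).mpr hall
        omega
    · intro hnall
      rcases h01 e with h0 | h1
      · exfalso
        by_cases heG : e ∈ G.edgeSet
        · have hmem : e ∈ p.edges := (hxE e heG).mp h0
          refine hnall ?_
          intro u hu
          induction e using Sym2.ind with
          | _ a b =>
            rcases Sym2.mem_iff.mp hu with rfl | rfl
            · exact p.fst_mem_support_of_mem_edges hmem
            · exact p.snd_mem_support_of_mem_edges hmem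
        · exact hnall ((hxF e ⟨he', heG⟩).mp h0)
      · exact h1
  refine ⟨?_, ?_, ?_⟩
  · refine ⟨insert S {U | ∃ u, u ∉ S ∧ U = {u}}, ⟨?_, ?_, ?_⟩, ?_⟩
    · rintro U hU W hW hne
      rcases hU with rfl | ⟨u, hu, rfl⟩ <;> rcases hW with rfl | ⟨u', hu', rfl⟩
      · exact absurd rfl hne
      · exact Set.disjoint_singleton_right.mpr hu'
      · exact Set.disjoint_singleton_left.mpr hu
      · exact Set.disjoint_singleton.mpr (fun h => hne (by rw [h]))
    · intro a
      by_cases ha : a ∈ S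
      · exact ⟨S, Set.mem_insert _ _, ha⟩
      · exact ⟨{a}, Set.mem_insert_of_mem _ ⟨a, ha, rfl⟩, rfl⟩
    · rintro U (rfl | ⟨u, hu, rfl⟩)
      · exact induce_support_connected p
      · exact induce_singleton_connected G u
    · ext e
      simp only [Set.mem_setOf_eq, cutEdges, Straddles]
      constructor
      · intro hx1
        have he' : e ∈ G'.edgeSet := by
          by_contra h
          rw [hsupp e h] at hx1
          omega
        refine ⟨he', ?_⟩
        rintro U (rfl | ⟨u, hu, rfl⟩) hall
        · exact (key e he').mp hx1 hall
        · induction e using Sym2.ind with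
          | _ a b =>
            have ha : a = u := hall a (Sym2.mem_mk_left a b)
            have hb : b = u := hall b (Sym2.mem_mk_right a b)
            exact (G'.ne_of_adj (G'.mem_edgeSet.mp he')) (ha.trans hb.symm)
      · rintro ⟨he', hst⟩
        exact (key e he').mpr (hst S (Set.mem_insert _ _))
  · refine (hxF _ hf).mpr ?_
    intro u hu
    rcases Sym2.mem_iff.mp hu with rfl | rfl
    · exact hvS
    · exact hwS
  · rintro f' hf' ⟨u, hu, hnu⟩
    rcases h01 f' with h0 | h1
    · exact absurd ((hxF f' hf').mp h0 u hu) hnu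
    · exact h1
end

section
/- For every connected graph G = (V,E) and every graph G' = (V,E') with E ⊆ E', the convex hull in ℝ^{E'} of the characteristic vectors of those multicuts of G' that are lifted from G is a polytope of dimension |E'|. -/
open SimpleGraph

variable {V : Type}

/-!
The affine hull of the lifted multicut vectors is the whole coordinate subspace `ℝ^{E'}`.
For a connected vertex set `S` of `G`, the decomposition into singletons and the one into `S`
plus singletons are both lifted multicuts, and their characteristic vectors differ exactly by
the indicator of the edges of `G'` inside `S`. Taking `S` to be a shortest `vw`-path of `G`,
every edge of `G'` inside `S` other than `vw` joins two vertices strictly closer in `G` than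
`v` and `w`, so induction on `G.dist v w` puts every unit vector `e_vw`, `vw ∈ E'`, in the
direction of the affine hull.
-/

theorem vectorSpan_convexHull {𝕜 E : Type*} [Ring 𝕜] [PartialOrder 𝕜] [AddCommGroup E]
    [Module 𝕜 E] (s : Set E) : vectorSpan 𝕜 (convexHull 𝕜 s) = vectorSpan 𝕜 s := by
  rw [← direction_affineSpan, affineSpan_convexHull, direction_affineSpan]

theorem vectorSpan_le_of_subset {k M : Type*} [Ring k] [AddCommGroup M] [Module k M]
    {s : Set M} {p : Submodule k M} (h : s ⊆ p) : vectorSpan k s ≤ p := by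
  rw [vectorSpan_def, Submodule.span_le]
  rintro _ ⟨a, ha, b, hb, rfl⟩
  exact p.sub_mem (h ha) (h hb)

namespace Pi

variable {R η : Type*} [CommSemiring R] [Finite η]

theorem spanSubset_le [DecidableEq η] {s : Set η} {p : Submodule R (η → R)}
    (h : ∀ i ∈ s, Pi.single i 1 ∈ p) : spanSubset R s ≤ p :=
  Submodule.span_le.2 <| by
    rintro _ ⟨i, hi, rfl⟩
    simpa using h i hi

theorem indicator_one_mem_spanSubset {s t : Set η} (h : t ⊆ s) :
    t.indicator 1 ∈ spanSubset R s :=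
  mem_spanSubset_iff.2 fun _ hi => Set.indicator_of_notMem (fun ht => hi (h ht)) _

end Pi

instance Sym2.finite {α : Type*} [Finite α] : Finite (Sym2 α) := Quot.finite _

namespace SimpleGraph.Walk

variable {G : SimpleGraph V} [DecidableEq V]

theorem dist_lt_length_of_mem_support {u v x y : V} (p : G.Walk u v) (hx : x ∈ p.support)
    (hy : y ∈ p.support) (hxy : s(x, y) ≠ s(u, v)) : G.dist x y < p.length := by
  rw [← p.take_spec hx, mem_support_append_iff] at hy
  rcases hy with hy | hy
  · calc G.dist x y = G.dist y x := dist_comm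
      _ ≤ ((p.takeUntil x hx).dropUntil y hy).length := dist_le _
      _ < p.length := by
        by_cases hyu : y = u
        · have hxv : x ≠ v := by rintro rfl; exact hxy (hyu ▸ Sym2.eq_swap)
          exact (length_dropUntil_le_length _ _).trans_lt (length_takeUntil_lt_length hx hxv)
        · exact (length_dropUntil_lt_length hy hyu).trans_le (length_takeUntil_le_length _ _)
  · calc G.dist x y ≤ ((p.dropUntil x hx).takeUntil y hy).length := dist_le _
      _ < p.length := by
        by_cases hyv : y = v
        · have hxu : x ≠ u := by rintro rfl; exact hxy (hyv ▸ rfl)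
          exact (length_takeUntil_le_length _ _).trans_lt (length_dropUntil_lt_length hx hxu)
        · exact (length_takeUntil_lt_length hy hyv).trans_le (length_dropUntil_le_length _ _)

end SimpleGraph.Walk

section LiftedMulticut

variable {G G' : SimpleGraph V}

theorem charVec_eq_indicator (M : Set (Sym2 V)) : charVec M = M.indicator 1 := by
  classical
  funext e
  simp [charVec, Set.indicator_apply]

theorem SimpleGraph.connected_induce_singleton (G : SimpleGraph V) (v : V) :
    (G.induce {v}).Connected := by
  rw [induce_singleton_eq_top]
  exact connected_top

def blockAndSingletons (S : Set V) : Set (Set V) := insert S ((fun u => {u}) '' Sᶜ)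

theorem isDecomposition_blockAndSingletons {S : Set V} (hS : (G.induce S).Connected) :
    IsDecomposition G (blockAndSingletons S) := by
  refine ⟨?_, fun v => ?_, ?_⟩
  · rintro U (rfl | ⟨u, hu, rfl⟩) W (rfl | ⟨w, hw, rfl⟩) hUW
    · exact absurd rfl hUW
    · exact Set.disjoint_singleton_right.2 hw
    · exact Set.disjoint_singleton_left.2 hu
    · exact Set.disjoint_singleton.2 fun h => hUW (h ▸ rfl)
  · by_cases hv : v ∈ S
    · exact ⟨S, Set.mem_insert _ _, hv⟩
    · exact ⟨{v}, Set.mem_insert_of_mem _ ⟨v, hv, rfl⟩, rfl⟩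
  · rintro U (rfl | ⟨u, -, rfl⟩)
    · exact hS
    · exact G.connected_induce_singleton u

theorem cutEdges_blockAndSingletons (G' : SimpleGraph V) (S : Set V) :
    cutEdges G' (blockAndSingletons S) = G'.edgeSet \ S.sym2 := by
  ext e
  induction e using Sym2.ind with | _ x y => ?_
  have hxy : s(x, y) ∈ G'.edgeSet → x ≠ y := fun he => G'.ne_of_adj he
  simp only [cutEdges, Straddles, blockAndSingletons, Set.forall_mem_insert,
    Set.forall_mem_image, Sym2.forall_mem_pair, Set.mem_singleton_iff, Set.mem_sdiff,
    Set.mem_ofPred_eq, Set.mk_mem_sym2_iff]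
  grind

theorem indicator_edgeSet_diff_sym2_mem_liftedVectors {S : Set V}
    (hS : (G.induce S).Connected) :
    (G'.edgeSet \ S.sym2).indicator 1 ∈ liftedVectors G G' :=
  ⟨_, ⟨_, isDecomposition_blockAndSingletons hS, rfl⟩, by
    rw [charVec_eq_indicator, cutEdges_blockAndSingletons]⟩

theorem indicator_edgeSet_inter_sym2_mem_vectorSpan {S : Set V} (hS : (G.induce S).Connected) :
    (G'.edgeSet ∩ S.sym2).indicator 1 ∈ vectorSpan ℝ (liftedVectors G G') := by
  obtain ⟨⟨v, -⟩⟩ := hS.nonempty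
  have hsingletons := indicator_edgeSet_diff_sym2_mem_liftedVectors (G' := G')
    (G.connected_induce_singleton v)
  have h := vsub_mem_vectorSpan ℝ hsingletons (indicator_edgeSet_diff_sym2_mem_liftedVectors hS)
  rwa [Set.sym2_singleton, Set.sdiff_singleton_eq_self
      fun h => G'.not_isDiag_of_mem_edgeSet h (Sym2.mk_isDiag_iff.2 rfl),
    vsub_eq_sub, ← Set.indicator_sdiff Set.sdiff_subset, Set.sdiff_sdiff_right_self] at h

theorem single_mem_vectorSpan_liftedVectors [Finite V] [DecidableEq V] (hG : G.Connected)
    {e : Sym2 V} (he : e ∈ G'.edgeSet) :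
    Pi.single e (1 : ℝ) ∈ vectorSpan ℝ (liftedVectors G G') := by
  induction e using Sym2.ind with | _ v w => ?_
  induction hn : G.dist v w using Nat.strong_induction_on generalizing v w with | _ n ih => ?_
  obtain ⟨p, hp⟩ := hG.exists_walk_length_eq_dist v w
  set T := G'.edgeSet ∩ {u | u ∈ p.support}.sym2
  have hvw : s(v, w) ∈ T := ⟨he, p.start_mem_support, p.end_mem_support⟩
  have hrest : (T \ {s(v, w)}).indicator 1 ∈ vectorSpan ℝ (liftedVectors G G') := by
    refine Pi.spanSubset_le ?_ (Pi.indicator_one_mem_spanSubset subset_rfl)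
    rintro f ⟨⟨hf, hfp⟩, hne⟩
    induction f using Sym2.ind with | _ a b => ?_
    exact ih _ (hn ▸ hp ▸ p.dist_lt_length_of_mem_support hfp.1 hfp.2 hne) a b hf rfl
  have h := Submodule.sub_mem _
    (indicator_edgeSet_inter_sym2_mem_vectorSpan p.connected_induce_support) hrest
  rwa [← Set.indicator_sdiff Set.sdiff_subset, Set.sdiff_sdiff_right_self,
    Set.inter_eq_right.2 (Set.singleton_subset_iff.2 hvw), Set.indicator_singleton] at h

theorem vectorSpan_liftedVectors [Finite V] (hG : G.Connected) :
    vectorSpan ℝ (liftedVectors G G') = Pi.spanSubset ℝ G'.edgeSet := by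
  classical
  refine le_antisymm (vectorSpan_le_of_subset ?_)
    (Pi.spanSubset_le fun e he => single_mem_vectorSpan_liftedVectors hG he)
  rintro _ ⟨M, ⟨P, -, rfl⟩, rfl⟩
  rw [charVec_eq_indicator]
  exact Pi.indicator_one_mem_spanSubset fun e he => he.1

end LiftedMulticut

theorem lifted_multicut_polytope_dimension_general [Fintype V]
    (G G' : SimpleGraph V) (hG : G.Connected) :
    Module.finrank ℝ (vectorSpan ℝ (convexHull ℝ (liftedVectors G G'))) =
      G'.edgeSet.ncard := by
  rw [vectorSpan_convexHull, vectorSpan_liftedVectors hG, Pi.dim_spanSubset]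

/-- For connected `G` and `G' ⊇ G`, the lifted multicut polytope
`Ξ_{GG'}` (convex hull of the characteristic vectors of multicuts of `G'` lifted
from `G`) has dimension `|E'|`. -/
theorem lifted_multicut_polytope_dimension [Fintype V] [DecidableEq V]
    (G G' : SimpleGraph V) (hG : G.Connected) (hle : G ≤ G') :
    Module.finrank ℝ (vectorSpan ℝ (convexHull ℝ (liftedVectors G G'))) =
      G'.edgeSet.ncard :=
  lifted_multicut_polytope_dimension_general G G' hG
end

section
/- Let G = (V,E) be connected, G' = (V,E') with E ⊆ E', and e ∈ E. The inequality 0 ≤ x_e defines a facet of the lifted multicut polytope Ξ_{GG'} if and only if e is not contained in any triangle of G'. -/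
open SimpleGraph

variable {V : Type}

/-! For `e = uv`, every difference of vertices of the face `x_e = 0` is supported on `E' \ e`,
so the face is a facet iff these differences span all of `ℝ^{E' \ e}`.

If `uvt` is a triangle of `G'`, a decomposition that keeps `u, v` together cuts `ut` iff it cuts
`vt`, so the face lies in the hyperplane `x_ut = x_vt`.

Otherwise each unit vector `χ_ab`, `ab ∈ E' \ e`, lies in that span, by induction on the weight of
a `G`-walk `p` from `a` to `b` in which `uv` counts as slightly shorter than the other edges. Let
`B` be the support of `p`, together with `u, v` if it meets them. Passing from the decomposition
with the single block `{u, v}` to the one with block `B` uncuts exactly the edges of `G'` inside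
`B` other than `uv`; each of them other than `ab` is joined by a lighter walk, namely a subwalk of
`p`, possibly preceded by `uv`. The detour through `uv` fails to be lighter only when `ab` closes
a triangle with `uv`. -/

namespace SimpleGraph.Walk

variable {G : SimpleGraph V}

def block (W : Set V) {a b : V} (p : G.Walk a b) : Set V :=
  {z | z ∈ p.support ∨ z ∈ W ∧ ¬ Disjoint {z | z ∈ p.support} W}

theorem block_eq_of_disjoint {W : Set V} {a b : V} {p : G.Walk a b}
    (h : Disjoint {z | z ∈ p.support} W) : p.block W = {z | z ∈ p.support} := by
  ext
  simp [block, h]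

theorem block_eq_of_not_disjoint {W : Set V} {a b : V} {p : G.Walk a b}
    (h : ¬ Disjoint {z | z ∈ p.support} W) : p.block W = {z | z ∈ p.support} ∪ W := by
  ext
  simp [block, h]

theorem connected_induce_block {W : Set V} (hW : (G.induce W).Preconnected) {a b : V}
    (p : G.Walk a b) : (G.induce (p.block W)).Connected := by
  by_cases h : Disjoint {z | z ∈ p.support} W
  · rw [block_eq_of_disjoint h]
    exact p.connected_induce_support
  · rw [block_eq_of_not_disjoint h]
    exact induce_union_connected p.connected_induce_support.preconnected hW
      (Set.not_disjoint_iff_nonempty_inter.mp h)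

theorem disjoint_block_or_subset (W : Set V) {a b : V} (p : G.Walk a b) :
    Disjoint (p.block W) W ∨ W ⊆ p.block W := by
  by_cases h : Disjoint {z | z ∈ p.support} W
  · exact Or.inl (block_eq_of_disjoint h ▸ h)
  · exact Or.inr (block_eq_of_not_disjoint h ▸ Set.subset_union_right)

variable [DecidableEq V]

theorem exists_length_lt_of_mem_support {a b x y : V} (p : G.Walk a b)
    (hx : x ∈ p.support) (hy : y ∈ p.support) (hxy : s(x, y) ≠ s(a, b)) :
    ∃ q : G.Walk x y, q.length < p.length := by
  have hp := congrArg length (p.take_spec hx)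
  rw [length_append] at hp
  rcases (mem_support_append_iff _ _).mp ((p.take_spec hx).symm ▸ hy) with hy | hy
  · set t := p.takeUntil x hx
    have ht := congrArg length (t.take_spec hy)
    rw [length_append] at ht
    refine ⟨(t.dropUntil y hy).reverse, ?_⟩
    rw [length_reverse]
    by_contra! hle
    have hya : a = y := eq_of_length_eq_zero (p := t.takeUntil y hy) (by omega)
    have hxb : x = b := eq_of_length_eq_zero (p := p.dropUntil x hx) (by omega)
    exact hxy (by rw [hya, hxb]; exact Sym2.eq_swap)
  · set d := p.dropUntil x hx
    have hd := congrArg length (d.take_spec hy)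
    rw [length_append] at hd
    refine ⟨d.takeUntil y hy, ?_⟩
    by_contra! hle
    have hax : a = x := eq_of_length_eq_zero (p := p.takeUntil x hx) (by omega)
    have hyb : y = b := eq_of_length_eq_zero (p := d.dropUntil y hy) (by omega)
    exact hxy (by rw [hax, hyb])

/-- Among walks of equal length, those through `e` are lighter: a stand-in for the length in the
graph with `e` contracted. -/
def lightWeight (e : Sym2 V) {a b : V} (p : G.Walk a b) : ℕ :=
  2 * p.length + if e ∈ p.edges then 0 else 1

theorem lightWeight_reverse (e : Sym2 V) {a b : V} (p : G.Walk a b) :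
    p.reverse.lightWeight e = p.lightWeight e := by
  simp [lightWeight]

theorem lightWeight_lt_of_length_lt (e : Sym2 V) {a b x y : V} {p : G.Walk a b}
    {q : G.Walk x y} (h : q.length < p.length) : q.lightWeight e < p.lightWeight e := by
  unfold lightWeight
  split_ifs <;> omega

theorem exists_cons_lightWeight_lt {G' : SimpleGraph V} {u v a b y : V} (huv : G.Adj u v)
    (hnt : ∀ t, ¬ (G'.Adj u t ∧ G'.Adj v t)) (p : G.Walk a b) (hab : G'.Adj a b)
    (hu : u ∉ p.support) (hv : v ∈ p.support) (hy : y ∈ p.support) (huy : G'.Adj u y) :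
    ∃ q : G.Walk u y, q.lightWeight s(u, v) < p.lightWeight s(u, v) := by
  by_cases hvy : s(v, y) = s(a, b)
  · exact absurd ⟨huy, by rwa [← G'.mem_edgeSet, hvy]⟩ (hnt y)
  obtain ⟨q, hq⟩ := p.exists_length_lt_of_mem_support hv hy hvy
  refine ⟨cons huv q, ?_⟩
  have he : s(u, v) ∉ p.edges := fun h => hu (p.fst_mem_support_of_mem_edges h)
  simp only [lightWeight, edges_cons, List.mem_cons, true_or, if_true, if_neg he, length_cons]
  omega

end SimpleGraph.Walk

theorem eq_of_mem_edgeSet_of_mem_sym2_pair {H : SimpleGraph V} {u v : V} {g : Sym2 V}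
    (hg : g ∈ H.edgeSet) (hguv : g ∈ ({u, v} : Set V).sym2) : g = s(u, v) := by
  induction g using Sym2.ind with
  | _ a b =>
    simp only [Set.mk_mem_sym2_iff, Set.mem_insert_iff, Set.mem_singleton_iff] at hguv
    rcases hguv with ⟨rfl | rfl, rfl | rfl⟩
    · exact absurd hg H.irrefl
    · rfl
    · exact Sym2.eq_swap
    · exact absurd hg H.irrefl

theorem straddles_iff {P : Set (Set V)} {g : Sym2 V} :
    Straddles P g ↔ ∀ U ∈ P, g ∉ U.sym2 := by
  induction g using Sym2.ind with
  | _ a b => simp [Straddles]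

theorem straddles_mk_iff_s10 {G : SimpleGraph V} {P : Set (Set V)} (hP : IsDecomposition G P)
    {U : Set V} (hU : U ∈ P) {w t : V} (hw : w ∈ U) : Straddles P s(w, t) ↔ t ∉ U := by
  rw [straddles_iff]
  refine ⟨fun h ht => h U hU ⟨hw, ht⟩, fun ht U' hU' hwt => ht ?_⟩
  obtain rfl : U' = U := by_contra fun hne => Set.disjoint_left.mp (hP.1 U' hU' U hU hne) hwt.1 hw
  exact hwt.2

def withSingletons (C : Set (Set V)) : Set (Set V) :=
  C ∪ (fun w => {w}) '' (⋃₀ C)ᶜ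

theorem isDecomposition_withSingletons {G : SimpleGraph V} {C : Set (Set V)}
    (hdisj : C.Pairwise Disjoint) (hconn : ∀ U ∈ C, (G.induce U).Connected) :
    IsDecomposition G (withSingletons C) := by
  refine ⟨?_, fun w => ?_, ?_⟩
  · rintro U (hU | ⟨w, hw, rfl⟩) U' (hU' | ⟨w', hw', rfl⟩) hne
    · exact hdisj hU hU' hne
    · exact Set.disjoint_singleton_right.mpr fun h => hw' ⟨U, hU, h⟩
    · exact Set.disjoint_singleton_left.mpr fun h => hw ⟨U', hU', h⟩
    · exact Set.disjoint_singleton.mpr fun h => hne (h ▸ rfl)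
  · by_cases hw : w ∈ ⋃₀ C
    · obtain ⟨U, hU, hwU⟩ := hw
      exact ⟨U, Or.inl hU, hwU⟩
    · exact ⟨{w}, Or.inr ⟨w, hw, rfl⟩, rfl⟩
  · rintro U (hU | ⟨w, -, rfl⟩)
    · exact hconn U hU
    · exact (connected_iff _).mpr ⟨Preconnected.of_subsingleton, ⟨⟨w, rfl⟩⟩⟩

theorem mem_cutEdges_withSingletons {G' : SimpleGraph V} {C : Set (Set V)} {g : Sym2 V} :
    g ∈ cutEdges G' (withSingletons C) ↔ g ∈ G'.edgeSet ∧ ∀ U ∈ C, g ∉ U.sym2 := by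
  simp only [cutEdges, straddles_iff, withSingletons, Set.mem_union,
    Set.mem_image, or_imp, forall_and, forall_exists_index, and_imp]
  refine and_congr_right fun hg => and_iff_left_of_imp fun _ => ?_
  rintro U w - rfl
  rw [Set.sym2_singleton, Set.mem_singleton_iff]
  rintro rfl
  exact G'.irrefl hg

section PiSingle

variable {ι K : Type*} [Fintype ι] [DecidableEq ι]

theorem mem_span_image_single [Semiring K] {A : Set ι} {x : ι → K} (hx : ∀ i ∉ A, x i = 0) :
    x ∈ Submodule.span K ((fun i => Pi.single i (1 : K)) '' A) := by
  rw [← Finset.univ_sum_single x]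
  refine Submodule.sum_mem _ fun i _ => ?_
  by_cases hi : i ∈ A
  · have h : Pi.single i (x i) = x i • Pi.single i (1 : K) := by
      rw [← Pi.single_smul', smul_eq_mul, mul_one]
    exact h ▸ Submodule.smul_mem _ _ (Submodule.subset_span ⟨i, hi, rfl⟩)
  · simp [hx i hi]

theorem vectorSpan_le_span_image_single [Ring K] {A : Set ι} {s : Set (ι → K)}
    (hs : ∀ x ∈ s, ∀ i ∉ A, x i = 0) :
    vectorSpan K s ≤ Submodule.span K ((fun i => Pi.single i (1 : K)) '' A) := by
  rw [vectorSpan_def, Submodule.span_le]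
  rintro _ ⟨x, hx, y, hy, rfl⟩
  exact mem_span_image_single fun i hi => by simp [hs x hx i hi, hs y hy i hi]

theorem finrank_span_image_single [DivisionRing K] (A : Set ι) :
    Module.finrank K (Submodule.span K ((fun i => Pi.single i (1 : K)) '' A)) = A.ncard := by
  have := Fintype.ofFinite A
  have hli : LinearIndependent K ((fun i => Pi.single i (1 : K)) ∘ (Subtype.val : A → ι)) :=
    (Pi.linearIndependent_single_one ι K).comp _ Subtype.val_injective
  rw [Set.image_eq_range, ← Nat.card_coe_set_eq, Nat.card_eq_fintype_card]
  exact finrank_span_eq_card hli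

theorem Set.Finite.indicator_one_eq_sum_single [AddCommMonoidWithOne K] {A : Set ι}
    (hA : A.Finite) : A.indicator 1 = ∑ i ∈ hA.toFinset, Pi.single i (1 : K) := by
  ext i
  classical
  simp [Set.indicator_apply, Finset.sum_pi_single]

end PiSingle

section LiftedVectors

variable {G G' : SimpleGraph V}

theorem nonneg_of_mem_liftedVectors {x : Sym2 V → ℝ} (hx : x ∈ liftedVectors G G')
    (g : Sym2 V) : 0 ≤ x g := by
  obtain ⟨M, -, rfl⟩ := hx
  rw [charVec_eq_indicator]
  exact Set.indicator_nonneg (fun _ _ => zero_le_one) g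

theorem eq_zero_of_mem_liftedVectors {x : Sym2 V → ℝ} (hx : x ∈ liftedVectors G G')
    {g : Sym2 V} (hg : g ∉ G'.edgeSet) : x g = 0 := by
  obtain ⟨M, ⟨P, -, rfl⟩, rfl⟩ := hx
  rw [charVec_eq_indicator]
  exact Set.indicator_of_notMem (fun h => hg h.1) _

def zeroFace (G G' : SimpleGraph V) (e : Sym2 V) : Set (Sym2 V → ℝ) :=
  {x ∈ liftedVectors G G' | x e = 0}

theorem apply_eq_of_mem_zeroFace {u v t : V} (huv : G'.Adj u v) (hut : G'.Adj u t)
    (hvt : G'.Adj v t) {x : Sym2 V → ℝ} (hx : x ∈ zeroFace G G' s(u, v)) :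
    x s(u, t) = x s(v, t) := by
  obtain ⟨⟨M, ⟨P, hP, rfl⟩, rfl⟩, hx0⟩ := hx
  rw [charVec_eq_indicator] at hx0 ⊢
  obtain ⟨U, hU, huvU⟩ : ∃ U ∈ P, s(u, v) ∈ U.sym2 := by
    by_contra! h
    rw [Set.indicator_of_mem (show s(u, v) ∈ cutEdges G' P from ⟨huv, straddles_iff.mpr h⟩)]
      at hx0
    exact one_ne_zero hx0
  obtain ⟨huU, hvU⟩ := Set.mk_mem_sym2_iff.mp huvU
  have hcut : ∀ w ∈ U, G'.Adj w t → (s(w, t) ∈ cutEdges G' P ↔ t ∉ U) :=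
    fun w hw hwt => (and_iff_right hwt).trans (straddles_mk_iff_s10 hP hU hw)
  classical
  rw [Set.indicator_apply, Set.indicator_apply]
  simp only [hcut u huU hut, hcut v hvU hvt, Pi.one_apply]

theorem charVec_cutEdges_withSingletons_mem_zeroFace {C : Set (Set V)}
    (hdisj : C.Pairwise Disjoint) (hconn : ∀ U ∈ C, (G.induce U).Connected) {e : Sym2 V}
    (he : ∃ U ∈ C, e ∈ U.sym2) :
    charVec (cutEdges G' (withSingletons C)) ∈ zeroFace G G' e := by
  refine ⟨⟨_, ⟨_, isDecomposition_withSingletons hdisj hconn, rfl⟩, rfl⟩, ?_⟩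
  obtain ⟨U, hU, heU⟩ := he
  rw [charVec_eq_indicator]
  exact Set.indicator_of_notMem (fun h => (mem_cutEdges_withSingletons.mp h).2 U hU heU) _

/-- The difference of two vertices of the face: the decomposition whose only non-singleton block
is `{u, v}`, and the one with block `B` (next to `{u, v}` when disjoint from it). -/
theorem indicator_mem_vectorSpan_zeroFace {u v : V} (huv : G.Adj u v) {B : Set V}
    (hB : (G.induce B).Connected) (hBuv : Disjoint B {u, v} ∨ {u, v} ⊆ B) :
    ((G'.edgeSet \ ({u, v} : Set V).sym2) ∩ B.sym2).indicator 1 ∈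
      vectorSpan ℝ (zeroFace G G' s(u, v)) := by
  set W : Set V := {u, v}
  have hW : (G.induce W).Connected := induce_pair_connected_of_adj huv
  have huvW : s(u, v) ∈ W.sym2 := by simp [W]
  have hcut₀ : cutEdges G' (withSingletons {W}) = G'.edgeSet \ W.sym2 := by
    ext g
    simp [mem_cutEdges_withSingletons]
  have h₀ : charVec (cutEdges G' (withSingletons {W})) ∈ zeroFace G G' s(u, v) :=
    charVec_cutEdges_withSingletons_mem_zeroFace (Set.pairwise_singleton _ _) (by simpa)
      ⟨W, rfl, huvW⟩
  obtain ⟨C, hC, hcut⟩ : ∃ C,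
      charVec (cutEdges G' (withSingletons C)) ∈ zeroFace G G' s(u, v) ∧
      cutEdges G' (withSingletons C) = (G'.edgeSet \ W.sym2) \ B.sym2 := by
    rcases hBuv with hdisj | hsub
    · refine ⟨{B, W}, charVec_cutEdges_withSingletons_mem_zeroFace
        (Set.pairwise_pair.mpr fun _ => ⟨hdisj, hdisj.symm⟩)
        (by rintro U (rfl | rfl) <;> assumption) ⟨W, by simp, huvW⟩, ?_⟩
      ext g
      simp only [mem_cutEdges_withSingletons, Set.mem_insert_iff, Set.mem_singleton_iff,
        forall_eq_or_imp, forall_eq, Set.mem_sdiff]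
      tauto
    · have hWB : W.sym2 ⊆ B.sym2 := fun g hg =>
        Set.mem_sym2_iff_subset.mpr ((Set.mem_sym2_iff_subset.mp hg).trans hsub)
      refine ⟨{B}, charVec_cutEdges_withSingletons_mem_zeroFace (Set.pairwise_singleton _ _)
        (by simpa) ⟨B, rfl, hWB huvW⟩, ?_⟩
      ext g
      simp only [mem_cutEdges_withSingletons, Set.mem_singleton_iff, forall_eq, Set.mem_sdiff]
      exact ⟨fun h => ⟨⟨h.1, fun hg => h.2 (hWB hg)⟩, h.2⟩, fun h => ⟨h.1.1, h.2⟩⟩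
  have h := vsub_mem_vectorSpan ℝ h₀ hC
  rwa [vsub_eq_sub, charVec_eq_indicator, charVec_eq_indicator, hcut, hcut₀,
    ← Set.indicator_sdiff Set.sdiff_subset, Set.sdiff_sdiff_right_self] at h

theorem vectorSpan_zeroFace_le [Fintype V] [DecidableEq V] (e : Sym2 V) :
    vectorSpan ℝ (zeroFace G G' e) ≤
      Submodule.span ℝ ((fun g => Pi.single g (1 : ℝ)) '' (G'.edgeSet \ {e})) :=
  vectorSpan_le_span_image_single fun x hx g hg => by
    by_cases hgE : g ∈ G'.edgeSet
    · obtain rfl : g = e := by simpa [hgE] using hg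
      exact hx.2
    · exact eq_zero_of_mem_liftedVectors hx.1 hgE

theorem vectorSpan_zeroFace_ne [DecidableEq V] {u v t : V} (huv : G'.Adj u v)
    (hut : G'.Adj u t) (hvt : G'.Adj v t) :
    vectorSpan ℝ (zeroFace G G' s(u, v)) ≠
      Submodule.span ℝ ((fun g => Pi.single g (1 : ℝ)) '' (G'.edgeSet \ {s(u, v)})) := by
  intro h
  let φ : (Sym2 V → ℝ) →ₗ[ℝ] ℝ :=
    LinearMap.proj (R := ℝ) (φ := fun _ => ℝ) s(u, t) -
      LinearMap.proj (R := ℝ) (φ := fun _ => ℝ) s(v, t)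
  have hφ : vectorSpan ℝ (zeroFace G G' s(u, v)) ≤ LinearMap.ker φ := by
    rw [vectorSpan_def, Submodule.span_le]
    rintro _ ⟨x, hx, y, hy, rfl⟩
    simp [φ, apply_eq_of_mem_zeroFace huv hut hvt hx, apply_eq_of_mem_zeroFace huv hut hvt hy]
  have hsingle : Pi.single s(u, t) (1 : ℝ) ∈ vectorSpan ℝ (zeroFace G G' s(u, v)) :=
    h ▸ Submodule.subset_span ⟨s(u, t), ⟨hut, by simp [hvt.ne', huv.ne]⟩, rfl⟩
  simpa [φ, Pi.single_apply, huv.ne', hvt.ne] using hφ hsingle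

end LiftedVectors

section TriangleFree

variable [DecidableEq V] {G G' : SimpleGraph V} {u v : V} (huv : G.Adj u v)
  (hnt : ∀ t, ¬ (G'.Adj u t ∧ G'.Adj v t))
include huv hnt

theorem exists_lightWeight_lt_of_mem_pair {a b x y : V} (p : G.Walk a b) (hab : G'.Adj a b)
    (hx : x ∈ ({u, v} : Set V)) (hxp : x ∉ p.support)
    (hp : ¬ Disjoint {z | z ∈ p.support} {u, v}) (hy : y ∈ p.support) (hxy : G'.Adj x y) :
    ∃ q : G.Walk x y, q.lightWeight s(u, v) < p.lightWeight s(u, v) := by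
  obtain ⟨w, hwp, hw⟩ := Set.not_disjoint_iff.mp hp
  rcases hx with rfl | rfl
  · have hv : v ∈ p.support := by
      rcases hw with rfl | rfl
      exacts [absurd hwp hxp, hwp]
    exact Walk.exists_cons_lightWeight_lt huv hnt p hab hxp hv hy hxy
  · have hu : u ∈ p.support := by
      rcases hw with rfl | rfl
      exacts [hwp, absurd hwp hxp]
    rw [Sym2.eq_swap]
    exact Walk.exists_cons_lightWeight_lt huv.symm (fun t h => hnt t h.symm) p hab hxp hu hy hxy

theorem exists_lightWeight_lt_of_mem_block {a b x y : V} (p : G.Walk a b) (hab : G'.Adj a b)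
    (hxy : G'.Adj x y) (hxyW : s(x, y) ∉ ({u, v} : Set V).sym2)
    (hxyB : s(x, y) ∈ (p.block {u, v}).sym2) (hne : s(x, y) ≠ s(a, b)) :
    ∃ q : G.Walk x y, q.lightWeight s(u, v) < p.lightWeight s(u, v) := by
  obtain ⟨hx, hy⟩ := hxyB
  by_cases hxp : x ∈ p.support <;> by_cases hyp : y ∈ p.support
  · obtain ⟨q, hq⟩ := p.exists_length_lt_of_mem_support hxp hyp hne
    exact ⟨q, Walk.lightWeight_lt_of_length_lt _ hq⟩
  · obtain ⟨hyW, hpW⟩ := hy.resolve_left hyp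
    obtain ⟨q, hq⟩ := exists_lightWeight_lt_of_mem_pair huv hnt p hab hyW hyp hpW hxp hxy.symm
    exact ⟨q.reverse, q.lightWeight_reverse _ ▸ hq⟩
  · obtain ⟨hxW, hpW⟩ := hx.resolve_left hxp
    exact exists_lightWeight_lt_of_mem_pair huv hnt p hab hxW hxp hpW hyp hxy
  · exact absurd ⟨(hx.resolve_left hxp).1, (hy.resolve_left hyp).1⟩ hxyW

theorem single_mem_vectorSpan_zeroFace [Fintype V] {a b : V} (p : G.Walk a b)
    (hab : G'.Adj a b) (hne : s(a, b) ≠ s(u, v)) :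
    Pi.single s(a, b) (1 : ℝ) ∈ vectorSpan ℝ (zeroFace G G' s(u, v)) := by
  induction hn : p.lightWeight s(u, v) using Nat.strong_induction_on generalizing a b with
  | _ n ih =>
  set K : Set (Sym2 V) := (G'.edgeSet \ ({u, v} : Set V).sym2) ∩ (p.block {u, v}).sym2
  have habK : s(a, b) ∈ K :=
    ⟨⟨hab, fun h => hne (eq_of_mem_edgeSet_of_mem_sym2_pair hab h)⟩,
      Or.inl p.start_mem_support, Or.inl p.end_mem_support⟩
  have hK := indicator_mem_vectorSpan_zeroFace (G' := G') huv
    (p.connected_induce_block (induce_pair_connected_of_adj huv).preconnected)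
    (p.disjoint_block_or_subset _)
  rw [K.toFinite.indicator_one_eq_sum_single,
    ← Finset.add_sum_erase _ _ (K.toFinite.mem_toFinset.mpr habK)] at hK
  have hrest : ∑ g ∈ K.toFinite.toFinset.erase s(a, b), Pi.single g (1 : ℝ) ∈
      vectorSpan ℝ (zeroFace G G' s(u, v)) := by
    refine Submodule.sum_mem _ fun g hg => ?_
    obtain ⟨hgab, hgK⟩ := Finset.mem_erase.mp hg
    obtain ⟨⟨hgE, hgW⟩, hgB⟩ := K.toFinite.mem_toFinset.mp hgK
    induction g using Sym2.ind with
    | _ x y =>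
    obtain ⟨q, hq⟩ := exists_lightWeight_lt_of_mem_block huv hnt p hab hgE hgW hgB hgab
    exact ih _ (hn ▸ hq) q hgE (fun h => hgW (h ▸ by simp)) rfl
  simpa using Submodule.sub_mem _ hK hrest

theorem vectorSpan_zeroFace_eq [Fintype V] (hG : G.Connected) :
    vectorSpan ℝ (zeroFace G G' s(u, v)) =
      Submodule.span ℝ ((fun g => Pi.single g (1 : ℝ)) '' (G'.edgeSet \ {s(u, v)})) := by
  refine le_antisymm (vectorSpan_zeroFace_le _) (Submodule.span_le.mpr ?_)
  rintro _ ⟨g, ⟨hg, hne⟩, rfl⟩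
  induction g using Sym2.ind with
  | _ a b => exact single_mem_vectorSpan_zeroFace huv hnt (hG.preconnected a b).some hg hne

end TriangleFree

/-- For `e ∈ E`, the inequality `0 ≤ x_e` defines a facet of
`Ξ_{GG'}` iff `e` is contained in no triangle of `G'`. -/
theorem box_lower_facet_tree_edge [Fintype V] [DecidableEq V]
    (G G' : SimpleGraph V) (hG : G.Connected) (hle : G ≤ G')
    (e : Sym2 V) (he : e ∈ G.edgeSet) :
    DefinesFacet G G' (fun x => 0 ≤ x e) (fun x => x e = 0) ↔
      ¬ ∃ u v t : V, e = s(u, v) ∧ G'.Adj u t ∧ G'.Adj v t := by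
  have he' : e ∈ G'.edgeSet := edgeSet_mono hle he
  have hdim : Module.finrank ℝ (Submodule.span ℝ ((fun g => Pi.single g (1 : ℝ)) ''
      (G'.edgeSet \ {e}))) = G'.edgeSet.ncard - 1 := by
    rw [finrank_span_image_single, Set.ncard_sdiff_singleton_of_mem he']
  have hfacet : DefinesFacet G G' (fun x => 0 ≤ x e) (fun x => x e = 0) ↔
      vectorSpan ℝ (zeroFace G G' e) =
        Submodule.span ℝ ((fun g => Pi.single g (1 : ℝ)) '' (G'.edgeSet \ {e})) :=
    ⟨fun h => Submodule.eq_of_le_of_finrank_eq (vectorSpan_zeroFace_le e) (h.2.trans hdim.symm),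
      fun h => ⟨fun x hx => nonneg_of_mem_liftedVectors hx e, by rw [← hdim, ← h]; rfl⟩⟩
  rw [hfacet]
  constructor
  · rintro h ⟨u, v, t, rfl, hut, hvt⟩
    exact vectorSpan_zeroFace_ne he' hut hvt h
  · intro hnt
    induction e using Sym2.ind with
    | _ u v => exact vectorSpan_zeroFace_eq he (fun t ht => hnt ⟨u, v, t, rfl, ht⟩) hG
end

section
/- Let G = (V,E) be connected, G' = (V,E') with E ⊆ E', and uv = e ∈ E' \ E. If the inequality 0 ≤ x_e defines a facet of Ξ_{GG'}, then: (a) no triangle of G' contains e; (b) every pair of u-v-cut-vertices other than {u,v} has distance at least 3 in G and at least 2 in G'; and (c) there is no triangle {s, s', t} in G' with {s,s'} a u-v-separating node set of G and t a u-v-cut-vertex of G. -/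
open SimpleGraph

variable {V : Type}

/-! For a lifted multicut `x` with `x_{uv} = 0`, the nodes `u` and `v` lie in one block `U` of the
decomposition. Since `U` induces a connected subgraph of `G`, it contains a `uv`-path of `G`, hence
every `u`-`v`-cut-vertex and a node of every `u`-`v`-separating set; and on the `G'`-edges at a
node of `U` the vector `x` is the indicator of leaving `U`. Each of the configurations excluded in
(a)–(c) therefore yields an equation (`x_{ut} = x_{vt}`, `x_{u'v'} = 0`, `x_{u'w} = x_{wv'}`,
`x_{ss'} = x_{st} + x_{s't}`) that holds on the whole face `x_{uv} = 0` and involves an edge other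
than `uv`. Together with `x_{uv} = 0` it confines the face to a subspace of dimension `|E'| - 2`,
so the face is no facet. -/

theorem finrank_vectorSpan_lt_ncard {K ι : Type*} [Field K] [Fintype ι]
    {S : Set (ι → K)} {T : Set ι} (hS : ∀ x ∈ S, Function.support x ⊆ T)
    (L : (ι → K) →ₗ[K] K) (hL : ∀ x ∈ S, L x = 0)
    {b : ι → K} (hb : Function.support b ⊆ T) (hLb : L b ≠ 0) :
    Module.finrank K (vectorSpan K S) < T.ncard := by
  classical
  set W : Submodule K (ι → K) := ⨅ i ∈ Tᶜ, LinearMap.ker (LinearMap.proj i)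
  have mem_W : ∀ y, y ∈ W ↔ Function.support y ⊆ T := by
    intro y
    rw [Function.support_subset_iff']
    simp [W, Submodule.mem_iInf]
  have hspan : vectorSpan K S ≤ W ⊓ LinearMap.ker L := by
    rw [vectorSpan_def, Submodule.span_le]
    rintro _ ⟨x, hx, y, hy, rfl⟩
    exact ⟨W.sub_mem ((mem_W x).2 (hS x hx)) ((mem_W y).2 (hS y hy)),
      by simp [hL x hx, hL y hy]⟩
  have hlt : W ⊓ LinearMap.ker L < W :=
    inf_lt_left.2 fun h => hLb (h ((mem_W b).2 hb))
  have hW : Module.finrank K W = T.ncard := by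
    rw [(LinearMap.iInfKerProjEquiv K (fun _ => K) disjoint_compl_right
      (by simp)).finrank_eq, Module.finrank_fintype_fun_eq_card, ← Nat.card_eq_fintype_card,
      Nat.card_coe_set_eq]
  calc Module.finrank K (vectorSpan K S)
      ≤ Module.finrank K ↥(W ⊓ LinearMap.ker L) := Submodule.finrank_mono hspan
    _ < Module.finrank K W := Submodule.finrank_lt_finrank_of_lt hlt
    _ = T.ncard := hW

theorem SimpleGraph.Reachable.two_lt_dist_of_ne_of_not_adj {G : SimpleGraph V} {u v : V}
    (h : G.Reachable u v) (hne : u ≠ v) (hnadj : ¬ G.Adj u v)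
    (hcn : G.commonNeighbors u v = ∅) : 2 < G.dist u v := by
  have := two_lt_edist_iff.2 ⟨hne, hnadj, hcn⟩
  rw [← h.coe_dist_eq_edist] at this
  exact_mod_cast this

section LiftedMulticut

variable {G G' : SimpleGraph V}

theorem support_subset_edgeSet_of_mem_liftedVectors {x : Sym2 V → ℝ}
    (hx : x ∈ liftedVectors G G') : Function.support x ⊆ G'.edgeSet := by
  obtain ⟨M, ⟨P, -, rfl⟩, rfl⟩ := hx
  intro f hf
  by_contra hfE
  have : f ∉ cutEdges G' P := fun h => hfE h.1
  simp [charVec, this] at hf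

theorem DefinesFacet.apply_eq_zero [Fintype V] {ineq : (Sym2 V → ℝ) → Prop} {e : Sym2 V}
    (hfacet : DefinesFacet G G' ineq (fun x => x e = 0)) (he : e ∈ G'.edgeSet)
    (L : (Sym2 V → ℝ) →ₗ[ℝ] ℝ) (hL : ∀ x ∈ liftedVectors G G', x e = 0 → L x = 0)
    {b : Sym2 V → ℝ} (hb : Function.support b ⊆ G'.edgeSet \ {e}) : L b = 0 := by
  by_contra hLb
  have hlt := finrank_vectorSpan_lt_ncard (S := {x ∈ liftedVectors G G' | x e = 0})
    (T := G'.edgeSet \ {e})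
    (fun x hx i hi => ⟨support_subset_edgeSet_of_mem_liftedVectors hx.1 hi,
      fun hie => hi (by rw [hie]; exact hx.2)⟩)
    L (fun x hx => hL x hx.1 hx.2) hb hLb
  rw [hfacet.2, Set.ncard_sdiff_singleton_of_mem he] at hlt
  exact lt_irrefl _ hlt

theorem IsDecomposition.straddles_iff {P : Set (Set V)} (hP : IsDecomposition G P)
    {U : Set V} (hU : U ∈ P) {a : V} (ha : a ∈ U) (b : V) :
    Straddles P s(a, b) ↔ b ∉ U := by
  refine ⟨fun h hb => h U hU (by simp [ha, hb]), fun hb W hW hab => ?_⟩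
  have haW : a ∈ W := hab a (by simp)
  obtain rfl : U = W := by
    by_contra hUW
    exact Set.disjoint_left.mp (hP.1 U hU W hW hUW) ha haW
  exact hb (hab b (by simp))

theorem IsDecomposition.exists_path {P : Set (Set V)} (hP : IsDecomposition G P)
    {U : Set V} (hU : U ∈ P) {u v : V} (hu : u ∈ U) (hv : v ∈ U) :
    ∃ p : G.Walk u v, p.IsPath ∧ ∀ w ∈ p.support, w ∈ U := by
  classical
  obtain ⟨q⟩ := (hP.2.2 U hU).preconnected ⟨u, hu⟩ ⟨v, hv⟩
  let p : G.Walk u v := q.map (Embedding.induce U).toHom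
  refine ⟨p.bypass, p.bypass_isPath, fun w hw => ?_⟩
  have : w ∈ q.support.map (Embedding.induce (G := G) U).toHom := by
    rw [← Walk.support_map]
    exact p.support_bypass_subset_support hw
  obtain ⟨⟨w, hwU⟩, -, rfl⟩ := List.mem_map.mp this
  exact hwU

def IsBoundaryIndicator (H : SimpleGraph V) (U : Set V) (x : Sym2 V → ℝ) : Prop :=
  ∀ a b, H.Adj a b → a ∈ U → x s(a, b) = Uᶜ.indicator 1 b

theorem exists_isBoundaryIndicator_of_apply_eq_zero {u v : V} (he : s(u, v) ∈ G'.edgeSet)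
    {x : Sym2 V → ℝ} (hx : x ∈ liftedVectors G G') (hx0 : x s(u, v) = 0) :
    ∃ U : Set V, (∀ w, IsCutVertex G u v w → w ∈ U) ∧
      (∀ S, IsSeparatingSet G u v S → ∃ s ∈ S, s ∈ U) ∧ IsBoundaryIndicator G' U x := by
  classical
  obtain ⟨M, ⟨P, hP, rfl⟩, rfl⟩ := hx
  have hstr : ¬ Straddles P s(u, v) := fun h => by simp [charVec, cutEdges, he, h] at hx0
  simp only [Straddles] at hstr
  push Not at hstr
  obtain ⟨U, hU, huvU⟩ := hstr
  obtain ⟨p, hp, hpU⟩ := hP.exists_path hU (huvU u (by simp)) (huvU v (by simp))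
  refine ⟨U, fun w hw => hpU w (hw p hp), fun S hS => ?_, fun a b hab ha => ?_⟩
  · obtain ⟨s, hs, hsp⟩ := hS.2.2 p hp
    exact ⟨s, hs, hpU s hsp⟩
  · by_cases hb : b ∈ U <;>
      simp [charVec, cutEdges, hab, hP.straddles_iff hU ha, hb]

variable [Fintype V] {ineq : (Sym2 V → ℝ) → Prop} {e : Sym2 V}

theorem DefinesFacet.not_adj (hfacet : DefinesFacet G G' ineq (fun x => x e = 0))
    (he : e ∈ G'.edgeSet) {a a' : V}
    (hblock : ∀ x ∈ liftedVectors G G', x e = 0 →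
      ∃ U, a ∈ U ∧ a' ∈ U ∧ IsBoundaryIndicator G' U x)
    (hne : s(a, a') ≠ e) : ¬ G'.Adj a a' := by
  classical
  intro hadj
  have key := hfacet.apply_eq_zero he (LinearMap.proj s(a, a')) (fun x hx hx0 => ?_)
    (b := Pi.single s(a, a') 1) (by simpa [Pi.support_single_of_ne] using ⟨hadj, hne⟩)
  · simp at key
  · obtain ⟨U, ha, ha', hU⟩ := hblock x hx hx0
    simp [hU a a' hadj ha, ha']

theorem DefinesFacet.not_adj_and_adj (hfacet : DefinesFacet G G' ineq (fun x => x e = 0))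
    (he : e ∈ G'.edgeSet) {a a' t : V}
    (hblock : ∀ x ∈ liftedVectors G G', x e = 0 →
      ∃ U, a ∈ U ∧ a' ∈ U ∧ IsBoundaryIndicator G' U x)
    (hne : a ≠ a') (hat : s(a, t) ≠ e) : ¬ (G'.Adj a t ∧ G'.Adj a' t) := by
  classical
  rintro ⟨hadj, hadj'⟩
  have key := hfacet.apply_eq_zero he
    ((LinearMap.proj s(a, t) : (Sym2 V → ℝ) →ₗ[ℝ] ℝ) - LinearMap.proj s(a', t))
    (fun x hx hx0 => ?_)
    (b := Pi.single s(a, t) 1) (by simpa [Pi.support_single_of_ne] using ⟨hadj, hat⟩)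
  · have : s(a', t) ≠ s(a, t) := by simp [hne.symm, hadj'.ne]
    simp [this] at key
  · obtain ⟨U, ha, ha', hU⟩ := hblock x hx hx0
    simp [hU a t hadj ha, hU a' t hadj' ha']

theorem DefinesFacet.not_triangle (hfacet : DefinesFacet G G' ineq (fun x => x e = 0))
    (he : e ∈ G'.edgeSet) {s s' t : V}
    (hblock : ∀ x ∈ liftedVectors G G', x e = 0 →
      ∃ U, t ∈ U ∧ (s ∈ U ∨ s' ∈ U) ∧ IsBoundaryIndicator G' U x)
    (hss' : s(s, s') ≠ e) : ¬ (G'.Adj s s' ∧ G'.Adj s t ∧ G'.Adj s' t) := by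
  classical
  rintro ⟨hss'_adj, hst, hs't⟩
  have key := hfacet.apply_eq_zero he
    ((LinearMap.proj s(s, s') : (Sym2 V → ℝ) →ₗ[ℝ] ℝ) - LinearMap.proj s(s, t)
      - LinearMap.proj s(s', t))
    (fun x hx hx0 => ?_) (b := Pi.single s(s, s') 1)
    (by simpa [Pi.support_single_of_ne] using ⟨hss'_adj, hss'⟩)
  · have h₁ : s(s, t) ≠ s(s, s') := by simp [hs't.ne.symm, hss'_adj.ne]
    have h₂ : s(s', t) ≠ s(s, s') := by simp [hst.ne.symm, hss'_adj.ne.symm]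
    simp [h₁, h₂] at key
  · obtain ⟨U, htU, hs | hs', hU⟩ := hblock x hx hx0
    · rw [Sym2.eq_swap (a := s')]
      simp [hU s s' hss'_adj hs, hU s t hst hs, hU t s' hs't.symm htU, htU]
    · rw [Sym2.eq_swap (a := s), Sym2.eq_swap (a := s)]
      simp [hU s' s hss'_adj.symm hs', hU t s hst.symm htU, hU s' t hs't hs', htU]

end LiftedMulticut

theorem box_lower_facet_lifted_edge_necessary_general [Fintype V]
    (G G' : SimpleGraph V) (hG : G.Connected) (hle : G ≤ G')
    (u v : V) (he : s(u, v) ∈ G'.edgeSet \ G.edgeSet)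
    (hfacet : DefinesFacet G G' (fun x => 0 ≤ x s(u, v)) (fun x => x s(u, v) = 0)) :
    (¬ ∃ t : V, G'.Adj u t ∧ G'.Adj v t) ∧
    (∀ u' v' : V, u' ≠ v' → IsCutVertex G u v u' → IsCutVertex G u v v' →
      s(u', v') ≠ s(u, v) → 3 ≤ G.dist u' v' ∧ 2 ≤ G'.dist u' v') ∧
    (¬ ∃ s s' t : V, G'.Adj s s' ∧ G'.Adj s t ∧ G'.Adj s' t ∧
      IsSeparatingSet G u v {s, s'} ∧ IsCutVertex G u v t) := by
  refine ⟨?_, ?_, ?_⟩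
  · rintro ⟨t, hut, hvt⟩
    refine hfacet.not_adj_and_adj he.1 (fun x hx hx0 => ?_) (show G'.Adj u v from he.1).ne
      (by simp [hut.ne', hvt.ne']) ⟨hut, hvt⟩
    obtain ⟨U, hcut, -, hU⟩ := exists_isBoundaryIndicator_of_apply_eq_zero he.1 hx hx0
    exact ⟨U, hcut u fun p _ => p.start_mem_support, hcut v fun p _ => p.end_mem_support, hU⟩
  · intro u' v' hne hu' hv' hne_e
    have hblock : ∀ x ∈ liftedVectors G G', x s(u, v) = 0 →
        ∃ U, u' ∈ U ∧ v' ∈ U ∧ IsBoundaryIndicator G' U x := fun x hx hx0 => by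
      obtain ⟨U, hcut, -, hU⟩ := exists_isBoundaryIndicator_of_apply_eq_zero he.1 hx hx0
      exact ⟨U, hcut u' hu', hcut v' hv', hU⟩
    have hnadj := hfacet.not_adj he.1 hblock hne_e
    have hreach := hG.preconnected u' v'
    refine ⟨hreach.two_lt_dist_of_ne_of_not_adj hne (fun h => hnadj (hle h)) ?_,
      (hreach.mono hle).one_lt_dist_of_ne_of_not_adj hne hnadj⟩
    refine Set.eq_empty_of_forall_notMem fun w ⟨hw, hw'⟩ => ?_
    exact hfacet.not_adj_and_adj he.1 hblock hne (fun h => he.2 (h ▸ hw)) ⟨hle hw, hle hw'⟩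
  · rintro ⟨s, s', t, hss', hst, hs't, hsep, ht⟩
    refine hfacet.not_triangle he.1 (fun x hx hx0 => ?_) ?_ ⟨hss', hst, hs't⟩
    · obtain ⟨U, hcut, hmeet, hU⟩ := exists_isBoundaryIndicator_of_apply_eq_zero he.1 hx hx0
      exact ⟨U, hcut t ht, by simpa using hmeet _ hsep, hU⟩
    · have hu : u ≠ s ∧ u ≠ s' := by simpa [not_or] using hsep.1
      simp [hu.1.symm, hu.2.symm]

/-- For `uv = e ∈ E' \ E`, if `0 ≤ x_e` defines a facet of
`Ξ_{GG'}`, then (a) no triangle of `G'` contains `e`; (b) every pair of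
`u`-`v`-cut-vertices other than `{u,v}` has distance at least 3 in `G` and at
least 2 in `G'`; (c) there is no triangle `{s,s',t}` of `G'` with `{s,s'}` a
`u`-`v`-separating node set and `t` a `u`-`v`-cut-vertex of `G`. -/
theorem box_lower_facet_lifted_edge_necessary [Fintype V] [DecidableEq V]
    (G G' : SimpleGraph V) (hG : G.Connected) (hle : G ≤ G')
    (u v : V) (he : s(u, v) ∈ G'.edgeSet \ G.edgeSet)
    (hfacet : DefinesFacet G G' (fun x => 0 ≤ x s(u, v)) (fun x => x s(u, v) = 0)) :
    (¬ ∃ t : V, G'.Adj u t ∧ G'.Adj v t) ∧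
    (∀ u' v' : V, u' ≠ v' → IsCutVertex G u v u' → IsCutVertex G u v v' →
      s(u', v') ≠ s(u, v) → 3 ≤ G.dist u' v' ∧ 2 ≤ G'.dist u' v') ∧
    (¬ ∃ s s' t : V, G'.Adj s s' ∧ G'.Adj s t ∧ G'.Adj s' t ∧
      IsSeparatingSet G u v {s, s'} ∧ IsCutVertex G u v t) :=
  box_lower_facet_lifted_edge_necessary_general G G' hG hle u v he hfacet
end

section
/- Let G' = (V,E') be a graph, C' a cycle of G' with a chord, and e ∈ C'. Then the cycle inequality x_e ≤ Σ_{e' ∈ C' \ {e}} x_{e'} is implied by the cycle inequalities of two shorter cycles obtained by splitting C' at the chord, and hence is not facet-defining for the multicut polytope of G'. -/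
open SimpleGraph

variable {V : Type}

/-- The real cycle inequality of a closed walk `c` at an edge `e`. -/
def cycleIneqR [DecidableEq V] {G' : SimpleGraph V} {u : V} (c : G'.Walk u u)
    (e : Sym2 V) (x : Sym2 V → ℝ) : Prop :=
  x e ≤ ∑ e' ∈ c.edges.toFinset.erase e, x e'

/-! Split `C'` at the chord `ab` into two edge-disjoint `ba`-paths `R₁ ∋ e` and `R₂`, and let
`C₁ = ab + R₁`, `C₂ = ab + R₂`. Summing the cycle inequality of `C₁` at `e` and that of `C₂` at
`ab`, the chord cancels and what remains is the cycle inequality of `C'` at `e`. Both summands are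
valid for multicuts, so every multicut vector tight for `C'` is tight for `C₁` and `C₂` as well.
These two tight equations are independent (the one of `C₂` expresses `x_ab` through edges other
than `e` and `ab`, then the one of `C₁` expresses `x_e`), so the face of `C'` has dimension at most
`|E'| - 2`. -/

namespace Finset

theorem sum_erase_insert_add_sum_erase_insert {ι M : Type*} [DecidableEq ι] [AddCommMonoid M]
    {s₁ s₂ : Finset ι} {e g : ι} (hs : Disjoint s₁ s₂) (he : e ∈ s₁) (hg₁ : g ∉ s₁)
    (hg₂ : g ∉ s₂) (x : ι → M) :
    ∑ i ∈ (insert g s₁).erase e, x i + ∑ i ∈ (insert g s₂).erase g, x i =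
      x g + ∑ i ∈ (s₁ ∪ s₂).erase e, x i := by
  have heg : g ≠ e := fun h => hg₁ (h ▸ he)
  have he₂ : e ∉ s₂ := disjoint_left.mp hs he
  rw [erase_insert_of_ne heg, erase_insert hg₂, erase_union_distrib, erase_eq_of_notMem he₂,
    sum_insert fun h => hg₁ (mem_of_mem_erase h),
    sum_union (disjoint_of_subset_left (erase_subset _ _) hs), add_assoc]

end Finset

section Linear

variable {ι K : Type*} [Field K]

variable (K) in
def sumEqSubspace [DecidableEq ι] (i : ι) (s : Finset ι) : Submodule K (ι → K) :=
  LinearMap.ker ((LinearMap.proj i : (ι → K) →ₗ[K] K) - ∑ j ∈ s, LinearMap.proj j)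

@[simp]
theorem mem_sumEqSubspace [DecidableEq ι] {i : ι} {s : Finset ι} {y : ι → K} :
    y ∈ sumEqSubspace K i s ↔ y i = ∑ j ∈ s, y j := by
  simp [sumEqSubspace, sub_eq_zero]

theorem Submodule.finrank_le_card_of_forall_eq_zero {W : Submodule K (ι → K)} (T : Finset ι)
    (hW : ∀ y ∈ W, (∀ t ∈ T, y t = 0) → y = 0) : Module.finrank K W ≤ T.card := by
  let restrict : W →ₗ[K] (T → K) :=
    (LinearMap.funLeft K K (↑) : (ι → K) →ₗ[K] T → K).comp W.subtype
  have hinj : Function.Injective restrict := by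
    rw [← LinearMap.ker_eq_bot, LinearMap.ker_eq_bot']
    rintro ⟨y, hy⟩ hzero
    exact Subtype.ext <| hW y hy fun t ht => congrFun hzero ⟨t, ht⟩
  have := LinearMap.finrank_le_finrank_of_injective hinj
  rwa [Module.finrank_fintype_fun_eq_card, Fintype.card_coe] at this

theorem finrank_pi_inf_sumEqSubspace_inf_sumEqSubspace_le [DecidableEq ι] {E s₁ s₂ : Finset ι}
    {e f : ι} (he : e ∈ E) (hf : f ∈ E) (hef : e ≠ f) (hs₁ : s₁ ⊆ E.erase e)
    (hs₂ : s₂ ⊆ E \ {e, f}) :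
    Module.finrank K ↥(Submodule.pi (↑E)ᶜ (fun _ => ⊥) ⊓ sumEqSubspace K e s₁ ⊓
      sumEqSubspace K f s₂) ≤ E.card - 2 := by
  have hcard : (E \ {e, f}).card = E.card - 2 := by
    rw [Finset.card_sdiff_of_subset (Finset.insert_subset he (by simpa using hf)),
      Finset.card_pair hef]
  refine hcard ▸ Submodule.finrank_le_card_of_forall_eq_zero _ ?_
  intro y hy hT
  simp only [Submodule.mem_inf, Submodule.mem_pi, Submodule.mem_bot, Set.mem_compl_iff,
    Finset.mem_coe, mem_sumEqSubspace] at hy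
  obtain ⟨⟨hoff, hy₁⟩, hy₂⟩ := hy
  have hyf : y f = 0 := hy₂.trans (Finset.sum_eq_zero fun t ht => hT t (hs₂ ht))
  have hye : y e = 0 := by
    refine hy₁.trans (Finset.sum_eq_zero fun t ht => ?_)
    by_cases htf : t = f
    · exact htf ▸ hyf
    obtain ⟨hte, htE⟩ := Finset.mem_erase.mp (hs₁ ht)
    exact hT t (by simp [htE, hte, htf])
  funext t
  by_cases htE : t ∈ E
  · by_cases hte : t = e
    · exact hte ▸ hye
    by_cases htf : t = f
    · exact htf ▸ hyf
    exact hT t (by simp [htE, hte, htf])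
  · exact hoff t htE

end Linear

namespace SimpleGraph.Walk

variable {G : SimpleGraph V} {u a b : V}

theorem IsCycle.exists_isPath_edges_perm [DecidableEq V] {c : G.Walk u u} (hc : c.IsCycle)
    (ha : a ∈ c.support) (hb : b ∈ c.support) (hab : a ≠ b) :
    ∃ P Q : G.Walk b a, P.IsPath ∧ Q.IsPath ∧ c.edges.Perm (P.edges ++ Q.edges) := by
  have hd : (c.rotate a ha).IsCycle := hc.rotate ha
  have hb' : b ∈ (c.rotate a ha).support := (c.mem_support_rotate_iff a ha).mpr hb
  have hspec := (c.rotate a ha).take_spec hb'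
  refine ⟨_, _, (hd.isPath_takeUntil hb').reverse,
    (hspec ▸ hd).isPath_of_append_right (not_nil_of_ne hab), ?_⟩
  rw [edges_reverse]
  refine (c.rotate_edges a ha).perm.symm.trans ?_
  rw [(congrArg edges hspec.symm).trans (edges_append _ _)]
  exact (List.reverse_perm _).symm.append_right _

structure IsChordSplit (c : G.Walk u u) (R₁ R₂ : G.Walk b a) : Prop where
  isPath_left : R₁.IsPath
  isPath_right : R₂.IsPath
  perm : c.edges.Perm (R₁.edges ++ R₂.edges)
  disjoint : R₁.edges.Disjoint R₂.edges
  chord_notMem_left : s(a, b) ∉ R₁.edges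
  chord_notMem_right : s(a, b) ∉ R₂.edges

theorem IsCycle.exists_isChordSplit [DecidableEq V] {c : G.Walk u u} (hc : c.IsCycle)
    (ha : a ∈ c.support) (hb : b ∈ c.support) (hab : a ≠ b) (hchord : s(a, b) ∉ c.edges)
    {e : Sym2 V} (he : e ∈ c.edges) :
    ∃ R₁ R₂ : G.Walk b a, IsChordSplit c R₁ R₂ ∧ e ∈ R₁.edges := by
  obtain ⟨R₁, R₂, hR₁, hR₂, hperm, heR₁⟩ : ∃ R₁ R₂ : G.Walk b a, R₁.IsPath ∧ R₂.IsPath ∧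
      c.edges.Perm (R₁.edges ++ R₂.edges) ∧ e ∈ R₁.edges := by
    obtain ⟨P, Q, hP, hQ, hPQ⟩ := hc.exists_isPath_edges_perm ha hb hab
    rcases List.mem_append.mp (hPQ.mem_iff.mp he) with heP | heQ
    · exact ⟨P, Q, hP, hQ, hPQ, heP⟩
    · exact ⟨Q, P, hQ, hP, hPQ.trans List.perm_append_comm, heQ⟩
  refine ⟨R₁, R₂, ⟨hR₁, hR₂, hperm, ?_, ?_, ?_⟩, heR₁⟩
  · exact List.disjoint_of_nodup_append (hperm.nodup_iff.mp hc.edges_nodup)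
  · exact fun h => hchord (hperm.mem_iff.mpr (List.mem_append_left _ h))
  · exact fun h => hchord (hperm.mem_iff.mpr (List.mem_append_right _ h))

namespace IsChordSplit

variable {c : G.Walk u u} {R₁ R₂ : G.Walk b a}

theorem symm (hs : IsChordSplit c R₁ R₂) : IsChordSplit c R₂ R₁ :=
  ⟨hs.isPath_right, hs.isPath_left, hs.perm.trans List.perm_append_comm, hs.disjoint.symm,
    hs.chord_notMem_right, hs.chord_notMem_left⟩

theorem isCycle_cons_left (hs : IsChordSplit c R₁ R₂) (h : G.Adj a b) : (cons h R₁).IsCycle :=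
  (cons_isCycle_iff R₁ h).mpr ⟨hs.isPath_left, hs.chord_notMem_left⟩

theorem edges_cons_union (hs : IsChordSplit c R₁ R₂) (h : G.Adj a b) :
    {i | i ∈ (cons h R₁).edges} ∪ {i | i ∈ (cons h R₂).edges} =
      insert s(a, b) {i | i ∈ c.edges} := by
  ext
  simp only [edges_cons, List.mem_cons, Set.mem_union, Set.mem_ofPred_eq, hs.perm.mem_iff,
    List.mem_append, Set.mem_insert_iff]
  tauto

theorem edges_cons_inter (hs : IsChordSplit c R₁ R₂) (h : G.Adj a b) :
    {i | i ∈ (cons h R₁).edges} ∩ {i | i ∈ (cons h R₂).edges} = {s(a, b)} := by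
  ext i
  have := @hs.disjoint i
  simp only [edges_cons, List.mem_cons, Set.mem_inter_iff, Set.mem_ofPred_eq,
    Set.mem_singleton_iff]
  tauto

theorem sum_erase_cons_add_sum_erase_cons [DecidableEq V] {M : Type*} [AddCommMonoid M]
    (hs : IsChordSplit c R₁ R₂) (h : G.Adj a b) {e : Sym2 V} (he : e ∈ R₁.edges)
    (x : Sym2 V → M) :
    ∑ i ∈ (cons h R₁).edges.toFinset.erase e, x i +
        ∑ i ∈ (cons h R₂).edges.toFinset.erase s(a, b), x i =
      x s(a, b) + ∑ i ∈ c.edges.toFinset.erase e, x i := by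
  rw [List.toFinset_eq_of_perm _ _ hs.perm, List.toFinset_append, edges_cons, edges_cons,
    List.toFinset_cons, List.toFinset_cons]
  exact Finset.sum_erase_insert_add_sum_erase_insert
    (List.disjoint_toFinset_iff_disjoint.mpr hs.disjoint) (by simpa)
    (by simpa using hs.chord_notMem_left) (by simpa using hs.chord_notMem_right) x

theorem erase_chord_subset_edgeFinset_sdiff [DecidableEq V] [Fintype G.edgeSet]
    (hs : IsChordSplit c R₁ R₂) (h : G.Adj a b) {e : Sym2 V} (he : e ∈ R₁.edges) :
    (cons h R₂).edges.toFinset.erase s(a, b) ⊆ G.edgeFinset \ {e, s(a, b)} := by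
  intro i hi
  obtain ⟨hne, hi⟩ := Finset.mem_erase.mp hi
  have hiR₂ : i ∈ R₂.edges := (List.mem_cons.mp (List.mem_toFinset.mp hi)).resolve_left hne
  have hie : i ≠ e := fun h => hs.disjoint he (h ▸ hiR₂)
  simp [hne, hie, mem_edgeFinset.mpr (R₂.edges_subset_edgeSet hiR₂)]

end IsChordSplit

end SimpleGraph.Walk

section Multicut

variable [DecidableEq V] {G : SimpleGraph V} {M : Set (Sym2 V)}

theorem IsMulticut.exists_mem_erase_of_mem (hM : IsMulticut G M) {u : V} {c : G.Walk u u}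
    (hc : c.IsCycle) {e : Sym2 V} (he : e ∈ c.edges) (heM : e ∈ M) :
    ∃ e' ∈ c.edges.toFinset.erase e, e' ∈ M := by
  by_contra! hno
  refine hM.2 c hc ((congrArg Set.ncard ?_).trans (Set.ncard_singleton e))
  ext e'
  simp only [Set.mem_inter_iff, Set.mem_ofPred_eq, Set.mem_singleton_iff]
  refine ⟨fun ⟨h₁, h₂⟩ => ?_, by rintro rfl; exact ⟨heM, he⟩⟩
  by_contra hne
  exact hno e' (by simp [hne, h₂]) h₁

theorem IsMulticut.cycleIneqR_charVec (hM : IsMulticut G M) {u : V} {c : G.Walk u u}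
    (hc : c.IsCycle) {e : Sym2 V} (he : e ∈ c.edges) : cycleIneqR c e (charVec M) := by
  have hnonneg (i : Sym2 V) : 0 ≤ charVec M i := by unfold charVec; split <;> norm_num
  by_cases heM : e ∈ M
  · obtain ⟨e', he', he'M⟩ := hM.exists_mem_erase_of_mem hc he heM
    calc charVec M e = charVec M e' := by simp [charVec, heM, he'M]
      _ ≤ _ := Finset.single_le_sum (fun i _ => hnonneg i) he'
  · calc charVec M e = 0 := by simp [charVec, heM]
      _ ≤ _ := Finset.sum_nonneg fun i _ => hnonneg i

theorem not_definesFacetMC_of_forall_eq_sum [Fintype V] [DecidableRel G.Adj]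
    {ineq eqn : (Sym2 V → ℝ) → Prop} {e f : Sym2 V} {s₁ s₂ : Finset (Sym2 V)}
    (he : e ∈ G.edgeSet) (hf : f ∈ G.edgeSet) (hef : e ≠ f)
    (hs₁ : s₁ ⊆ G.edgeFinset.erase e) (hs₂ : s₂ ⊆ G.edgeFinset \ {e, f})
    (htight : ∀ x ∈ multicutVectors G, eqn x → x e = ∑ i ∈ s₁, x i ∧ x f = ∑ i ∈ s₂, x i) :
    ¬ DefinesFacetMC G ineq eqn := by
  rintro ⟨-, hdim⟩
  set W : Submodule ℝ (Sym2 V → ℝ) := Submodule.pi (↑G.edgeFinset)ᶜ (fun _ => ⊥) ⊓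
    sumEqSubspace ℝ e s₁ ⊓ sumEqSubspace ℝ f s₂
  have hface : {x ∈ multicutVectors G | eqn x} ⊆ W := by
    rintro _ ⟨⟨M, hM, rfl⟩, hx⟩
    simp only [W, SetLike.mem_coe, Submodule.mem_inf, Submodule.mem_pi, Submodule.mem_bot,
      mem_sumEqSubspace, Set.mem_compl_iff, mem_edgeFinset]
    exact ⟨⟨fun i hi => by simp [charVec, show i ∉ M from fun h => hi (hM.1 h)],
      (htight _ ⟨M, hM, rfl⟩ hx).1⟩, (htight _ ⟨M, hM, rfl⟩ hx).2⟩
  have hspan : vectorSpan ℝ {x ∈ multicutVectors G | eqn x} ≤ W := by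
    rw [vectorSpan_def, Submodule.span_le]
    rintro _ ⟨x, hx, y, hy, rfl⟩
    exact W.sub_mem (hface hx) (hface hy)
  have hle := (Submodule.finrank_mono hspan).trans
    (finrank_pi_inf_sumEqSubspace_inf_sumEqSubspace_le (mem_edgeFinset.mpr he)
      (mem_edgeFinset.mpr hf) hef hs₁ hs₂)
  have htwo : 2 ≤ G.edgeFinset.card := by
    simpa [Finset.card_pair hef] using Finset.card_le_card
      (Finset.insert_subset (mem_edgeFinset.mpr he)
        (Finset.singleton_subset_iff.mpr (mem_edgeFinset.mpr hf)))
  rw [← coe_edgeFinset, Set.ncard_coe_finset] at hdim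
  omega

end Multicut

/-- If a cycle `C'` of `G'` has a chord `ab`, then for every
`e ∈ C'` the cycle inequality of `C'` at `e` is implied by the cycle inequalities
of the two shorter cycles obtained by splitting `C'` at the chord, and hence is
not facet-defining for the multicut polytope of `G'`. -/
theorem chordal_cycle_inequality_not_facet [Fintype V] [DecidableEq V]
    (G' : SimpleGraph V) {u0 : V} (c : G'.Walk u0 u0) (hc : c.IsCycle)
    (a b : V) (hchord : G'.Adj a b) (ha : a ∈ c.support) (hb : b ∈ c.support)
    (hnotedge : s(a, b) ∉ c.edges) (e : Sym2 V) (he : e ∈ c.edges) :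
    (∃ (c₁ : G'.Walk a a) (c₂ : G'.Walk a a), c₁.IsCycle ∧ c₂.IsCycle ∧
      s(a, b) ∈ c₁.edges ∧ s(a, b) ∈ c₂.edges ∧ e ∈ c₁.edges ∧
      {e' | e' ∈ c₁.edges} ∪ {e' | e' ∈ c₂.edges} = insert s(a, b) {e' | e' ∈ c.edges} ∧
      {e' | e' ∈ c₁.edges} ∩ {e' | e' ∈ c₂.edges} = {s(a, b)} ∧
      ∀ x : Sym2 V → ℝ, cycleIneqR c₁ e x → cycleIneqR c₂ s(a, b) x →
        cycleIneqR c e x) ∧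
    ¬ DefinesFacetMC G' (fun x => cycleIneqR c e x)
        (fun x => x e = ∑ e' ∈ c.edges.toFinset.erase e, x e') := by
  classical
  obtain ⟨R₁, R₂, hs, heR₁⟩ := hc.exists_isChordSplit ha hb hchord.ne hnotedge he
  have hc₁ := hs.isCycle_cons_left hchord
  have hc₂ := hs.symm.isCycle_cons_left hchord
  have hsum := hs.sum_erase_cons_add_sum_erase_cons (M := ℝ) hchord heR₁
  refine ⟨⟨Walk.cons hchord R₁, Walk.cons hchord R₂, hc₁, hc₂, List.mem_cons_self,
    List.mem_cons_self, List.mem_cons_of_mem _ heR₁, hs.edges_cons_union hchord,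
    hs.edges_cons_inter hchord,
    fun x h₁ h₂ => by unfold cycleIneqR at *; linarith [hsum x]⟩, ?_⟩
  refine not_definesFacetMC_of_forall_eq_sum (f := s(a, b))
    (s₁ := (Walk.cons hchord R₁).edges.toFinset.erase e)
    (s₂ := (Walk.cons hchord R₂).edges.toFinset.erase s(a, b)) (c.edges_subset_edgeSet he) hchord
    (fun h => hs.chord_notMem_left (h ▸ heR₁))
    (Finset.erase_subset_erase _ fun i hi =>
      mem_edgeFinset.mpr ((Walk.cons hchord R₁).edges_subset_edgeSet (List.mem_toFinset.mp hi)))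
    (hs.erase_chord_subset_edgeFinset_sdiff hchord heR₁) fun x ⟨M, hM, hx⟩ htight => ?_
  subst hx
  have h₁ := hM.cycleIneqR_charVec hc₁ (List.mem_cons_of_mem _ heR₁)
  have h₂ := hM.cycleIneqR_charVec hc₂ (e := s(a, b)) List.mem_cons_self
  unfold cycleIneqR at h₁ h₂
  constructor <;> linarith [hsum (charVec M)]
end

section
/- Let G = (V,E) be connected, G' = (V,E') with E ⊆ E', vw ∈ E' \ E, and C a vw-cut of G. For every x ∈ {0,1}^{E'} encoding a multicut of G' lifted from G that satisfies 1 − x_{vw} = Σ_{e ∈ C}(1 − x_e), every maximal connected component of the graph (V, {e ∈ E : x_e = 0}) is (vw,C)-connected; at most one such component is properly (vw,C)-connected, and one exists if and only if x_{vw} = 0. -/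
open SimpleGraph

variable {V : Type}

section Helpers

variable [Fintype V] [DecidableEq V]

private lemma reach_of_induce_aux {G : SimpleGraph V} {S : Set V} (H : SimpleGraph V)
    (hedges : ∀ c d : V, c ∈ S → d ∈ S → G.Adj c d → H.Adj c d) :
    ∀ {a b : S} (_p : (G.induce S).Walk a b), H.Reachable a b := by
  intro a b p
  induction p with
  | nil => rfl
  | @cons a c b h p ih =>
    exact (SimpleGraph.Adj.reachable (hedges a c a.2 c.2 h)).trans ih

private lemma mem_support_of_mem_edges' {G : SimpleGraph V} {u v a : V} {e : Sym2 V}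
    (p : G.Walk u v) (he : e ∈ p.edges) (ha : a ∈ e) : a ∈ p.support := by
  induction e with
  | _ x y =>
    rcases Sym2.mem_iff.mp ha with rfl | rfl
    · exact p.fst_mem_support_of_mem_edges he
    · exact p.snd_mem_support_of_mem_edges he

private lemma endpoint_side {G : SimpleGraph V} {v w : V} {C : Finset (Sym2 V)}
    (hC : IsCut G v w C) {e : Sym2 V} (he : e ∈ C) {a : V} (ha : a ∈ e) :
    a ∈ vSide G C v ∪ vSide G C w := by
  obtain ⟨hCE, hncut, hmin⟩ := hC
  obtain ⟨p0⟩ := hmin (C.erase e) (Finset.erase_ssubset he)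
  set q := p0.bypass with hq
  have hqp : q.IsPath := p0.bypass_isPath
  have key : ∀ {c d : V} (r : (G.deleteEdges ↑(C.erase e)).Walk c d), e ∉ r.edges →
      (G.deleteEdges ↑C).Reachable c d := by
    intro c d r hre
    refine ⟨r.transfer _ ?_⟩
    intro e' he'
    have h1 := r.edges_subset_edgeSet he'
    rw [edgeSet_deleteEdges] at h1 ⊢
    refine ⟨h1.1, fun hmem => ?_⟩
    rcases eq_or_ne e' e with rfl | hne'
    · exact hre he'
    · exact h1.2 (Finset.mem_coe.mpr (Finset.mem_erase.mpr ⟨hne', hmem⟩))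
  have heq : e ∈ q.edges := by
    by_contra hne
    exact hncut (key q hne)
  have hsup : a ∈ q.support := mem_support_of_mem_edges' q heq ha
  have hedges : q.edges = (q.takeUntil a hsup).edges ++ (q.dropUntil a hsup).edges := by
    rw [← SimpleGraph.Walk.edges_append, q.take_spec hsup]
  have hnd : q.edges.Nodup := hqp.isTrail.edges_nodup
  rw [hedges] at hnd heq
  rcases List.mem_append.mp heq with h1 | h2
  · have h2' : e ∉ (q.dropUntil a hsup).edges :=
      fun h => (List.disjoint_of_nodup_append hnd) h1 h
    exact Or.inr ((key _ h2').symm)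
  · have h1' : e ∉ (q.takeUntil a hsup).edges :=
      fun h => (List.disjoint_of_nodup_append hnd) h h2
    exact Or.inl (key _ h1')

private lemma sides_cover {G : SimpleGraph V} {v w : V} {C : Finset (Sym2 V)}
    (hG : G.Connected) (hC : IsCut G v w C) (u : V) :
    u ∈ vSide G C v ∪ vSide G C w := by
  obtain ⟨p⟩ := hG.preconnected v u
  have main : ∀ {a b : V} (_ : G.Walk a b), a ∈ vSide G C v ∪ vSide G C w →
      b ∈ vSide G C v ∪ vSide G C w := by
    intro a b r
    induction r with
    | nil => exact id
    | @cons a c b h r ih =>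
      intro hac
      refine ih ?_
      by_cases hm : s(a, c) ∈ C
      · exact endpoint_side hC hm (Sym2.mem_mk_right _ _)
      · have hadj : (G.deleteEdges ↑C).Adj a c := by
          rw [deleteEdges_adj]; exact ⟨h, hm⟩
        rcases hac with h' | h'
        · exact Or.inl (h'.trans hadj.reachable)
        · exact Or.inr (h'.trans hadj.reachable)
  exact main p (Or.inl (Reachable.refl v))

end Helpers
/-- For `vw ∈ E' \ E` and a `vw`-cut `C` of `G`: every `x`
encoding a lifted multicut with `1 - x_{vw} = Σ_{e ∈ C}(1 - x_e)` decomposes `G`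
into `(vw,C)`-connected components; at most one component is properly
`(vw,C)`-connected, and one exists iff `x_{vw} = 0`. -/
theorem cut_equality_components [Fintype V] [DecidableEq V]
    (G G' : SimpleGraph V) (hG : G.Connected) (hle : G ≤ G')
    (v w : V) (hf : s(v, w) ∈ G'.edgeSet \ G.edgeSet)
    (C : Finset (Sym2 V)) (hC : IsCut G v w C)
    (x : Sym2 V → ℕ) (h01 : ∀ e, x e = 0 ∨ x e = 1)
    (hsupp : ∀ e ∉ G'.edgeSet, x e = 0)
    (hx : IsLiftedMulticut G G' {e | x e = 1})
    (heq : 1 - x s(v, w) = ∑ e ∈ C, (1 - x e)) :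
    (∀ u : V, VWCConnected G v w C (compSupp (G.deleteEdges {e | x e = 1}) u)) ∧
    (∀ u u' : V,
      ProperlyConnected G v w C (compSupp (G.deleteEdges {e | x e = 1}) u) →
      ProperlyConnected G v w C (compSupp (G.deleteEdges {e | x e = 1}) u') →
      compSupp (G.deleteEdges {e | x e = 1}) u =
        compSupp (G.deleteEdges {e | x e = 1}) u') ∧
    ((∃ u : V, ProperlyConnected G v w C (compSupp (G.deleteEdges {e | x e = 1}) u)) ↔
      x s(v, w) = 0) := by
  classical
  set H := G.deleteEdges {e | x e = 1} with hHdef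
  have hHG : H ≤ G := SimpleGraph.deleteEdges_le _
  obtain ⟨P, ⟨hdisj, hcover, hconn⟩, hM⟩ := hx
  -- basic edge facts
  have hx1_iff : ∀ e : Sym2 V, x e = 1 ↔ e ∈ G'.edgeSet ∧ Straddles P e := by
    intro e
    have := Set.ext_iff.mp hM e
    simpa [cutEdges, Set.mem_setOf_eq] using this
  have hx0_of_block : ∀ e ∈ G'.edgeSet, ∀ U ∈ P, (∀ c ∈ e, c ∈ U) → x e = 0 := by
    intro e heE U hU hall
    rcases h01 e with h | h
    · exact h
    · exact absurd hall (((hx1_iff e).mp h).2 U hU)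
  have hblock_of_x0 : ∀ e ∈ G'.edgeSet, x e = 0 → ∃ U ∈ P, ∀ c ∈ e, c ∈ U := by
    intro e heE h0
    by_contra hnone
    push_neg at hnone
    have hstr : Straddles P e := by
      intro U hU hall
      obtain ⟨c, hc1, hc2⟩ := hnone U hU
      exact hc2 (hall c hc1)
    have := (hx1_iff e).mpr ⟨heE, hstr⟩
    omega
  have hHadj : ∀ a b : V, H.Adj a b ↔ G.Adj a b ∧ x s(a, b) = 0 := by
    intro a b
    rw [hHdef, deleteEdges_adj]
    constructor
    · rintro ⟨h1, h2⟩
      refine ⟨h1, ?_⟩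
      rcases h01 s(a, b) with h | h
      · exact h
      · exact absurd h h2
    · rintro ⟨h1, h2⟩
      exact ⟨h1, by simp [Set.mem_setOf_eq, h2]⟩
  have hHedge_x0 : ∀ {a b : V} (p : H.Walk a b), ∀ e ∈ p.edges, x e = 0 := by
    intro a b p e he
    have h1 := p.edges_subset_edgeSet he
    rw [hHdef, edgeSet_deleteEdges] at h1
    rcases h01 e with h | h
    · exact h
    · exact absurd h h1.2
  -- blocks are H-connected
  have block_reach : ∀ U ∈ P, ∀ a ∈ U, ∀ b ∈ U, H.Reachable a b := by
    intro U hU a ha b hb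
    obtain ⟨p⟩ := (hconn U hU).preconnected ⟨a, ha⟩ ⟨b, hb⟩
    refine reach_of_induce_aux H ?_ p
    intro c d hc hd hadj
    rw [hHadj]
    refine ⟨hadj, hx0_of_block _ (hle hadj) U hU ?_⟩
    intro z hz
    rcases Sym2.mem_iff.mp hz with rfl | rfl
    · exact hc
    · exact hd
  -- H-walks stay in blocks
  have walk_block : ∀ {a b : V} (_ : H.Walk a b) (U : Set V), U ∈ P → a ∈ U → b ∈ U := by
    intro a b p
    induction p with
    | nil => intro U hU ha; exact ha
    | @cons a c b h r ih =>
      intro U hU ha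
      have h0 : x s(a, c) = 0 := ((hHadj a c).mp h).2
      have hGadj : G.Adj a c := ((hHadj a c).mp h).1
      obtain ⟨U', hU', hall⟩ := hblock_of_x0 s(a, c) (hle hGadj) h0
      have hUU : U = U' := by
        by_contra hne
        exact (Set.disjoint_left.mp (hdisj U hU U' hU' hne) ha)
          (hall a (Sym2.mem_mk_left _ _))
      subst hUU
      exact ih U hU (hall c (Sym2.mem_mk_right _ _))
  have comp_eq_block : ∀ (u : V) (U : Set V), U ∈ P → u ∈ U → compSupp H u = U := by
    intro u U hU hu
    ext u'
    constructor
    · intro hr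
      obtain ⟨p⟩ := (hr : H.Reachable u u')
      exact walk_block p U hU hu
    · intro hu'
      exact block_reach U hU u hu u' hu'
  have comp_conn : ∀ u : V, (G.induce (compSupp H u)).Connected := by
    intro u
    obtain ⟨U, hU, hu⟩ := hcover u
    rw [comp_eq_block u U hU hu]
    exact hconn U hU
  have comp_eq_of_reach : ∀ {a b : V}, H.Reachable a b → compSupp H a = compSupp H b := by
    intro a b h
    ext c
    exact ⟨fun hc => h.symm.trans hc, fun hc => h.trans hc⟩
  -- part 2, independent of cases
  have part2 : ∀ u u' : V,
      ProperlyConnected G v w C (compSupp H u) → ProperlyConnected G v w C (compSupp H u') →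
      compSupp H u = compSupp H u' := by
    intro u u' h1 h2
    have hv1 : H.Reachable u v := h1.2.1
    have hv2 : H.Reachable u' v := h2.2.1
    rw [comp_eq_of_reach hv1, comp_eq_of_reach hv2]
  rcases h01 s(v, w) with hx0 | hx1
  · -- x_{vw} = 0 : exactly one edge of C has x = 0
    rw [hx0] at heq
    have hsum : ∑ e ∈ C, (1 - x e) = ∑ e ∈ C, if x e = 0 then 1 else 0 :=
      Finset.sum_congr rfl fun e _ => by rcases h01 e with h | h <;> simp [h]
    have hcard : (C.filter fun e => x e = 0).card = 1 := by
      rw [Finset.card_filter, ← hsum, ← heq]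
    obtain ⟨e0, he0⟩ := Finset.card_eq_one.mp hcard
    have he0m : e0 ∈ C.filter fun e => x e = 0 := he0 ▸ Finset.mem_singleton_self e0
    have he0C : e0 ∈ C := (Finset.mem_filter.mp he0m).1
    have hxe0 : x e0 = 0 := (Finset.mem_filter.mp he0m).2
    have huniq : ∀ e ∈ C, x e = 0 → e = e0 := by
      intro e he h0
      have : e ∈ C.filter fun e => x e = 0 := Finset.mem_filter.mpr ⟨he, h0⟩
      rw [he0] at this
      exact Finset.mem_singleton.mp this
    -- v and w lie in a common block, hence H-reachable
    have hvw_reach : H.Reachable v w := by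
      obtain ⟨U, hU, hall⟩ := hblock_of_x0 s(v, w) hf.1 hx0
      exact block_reach U hU v (hall v (Sym2.mem_mk_left _ _)) w (hall w (Sym2.mem_mk_right _ _))
    -- e0's endpoints lie in the component of v
    have he0in : ∀ c ∈ e0, c ∈ compSupp H v := by
      obtain ⟨p⟩ := hvw_reach
      have hpe0 : e0 ∈ p.edges := by
        by_contra hne
        refine hC.2.1 ⟨p.transfer _ ?_⟩
        intro e he
        have h1 := p.edges_subset_edgeSet he
        rw [hHdef, edgeSet_deleteEdges] at h1
        rw [edgeSet_deleteEdges]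
        refine ⟨h1.1, fun hmem => ?_⟩
        exact hne (huniq e hmem (hHedge_x0 p e he) ▸ he)
      intro c hc
      have hsup : c ∈ p.support := mem_support_of_mem_edges' p hpe0 hc
      exact ⟨p.takeUntil c hsup⟩
    -- the component of v is properly connected
    have hproper : ProperlyConnected G v w C (compSupp H v) := by
      refine ⟨comp_conn v, Reachable.refl v, hvw_reach, ?_⟩
      have : {e | e ∈ C ∧ ∀ c ∈ e, c ∈ compSupp H v} = {e0} := by
        ext e
        simp only [Set.mem_setOf_eq, Set.mem_singleton_iff]
        constructor
        · rintro ⟨heC, hin⟩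
          obtain ⟨U, hU, hvU⟩ := hcover v
          have hcomp : compSupp H v = U := comp_eq_block v U hU hvU
          refine huniq e heC (hx0_of_block e (edgeSet_mono hle (hC.1 heC)) U hU ?_)
          intro c hce
          exact hcomp ▸ hin c hce
        · rintro rfl
          exact ⟨he0C, he0in⟩
      rw [this, Set.ncard_singleton]
    refine ⟨?_, part2, ?_⟩
    · -- every component is (vw,C)-connected
      intro u
      by_cases hu : H.Reachable u v
      · rw [comp_eq_of_reach hu]
        exact Or.inl hproper
      · refine Or.inr ⟨comp_conn u, ?_⟩
        have hstay : ∀ u' ∈ compSupp H u, (G.deleteEdges ↑C).Reachable u u' := by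
          intro u' hu'
          obtain ⟨p⟩ := (hu' : H.Reachable u u')
          refine ⟨p.transfer _ ?_⟩
          intro e he
          have h1 := p.edges_subset_edgeSet he
          rw [hHdef, edgeSet_deleteEdges] at h1
          rw [edgeSet_deleteEdges]
          refine ⟨h1.1, fun hmem => ?_⟩
          have he0p : e0 ∈ p.edges := huniq e hmem (hHedge_x0 p e he) ▸ he
          have hc0 : e0.out.1 ∈ p.support :=
            mem_support_of_mem_edges' p he0p (Sym2.out_fst_mem e0)
          have h2 : H.Reachable u e0.out.1 := ⟨p.takeUntil _ hc0⟩
          have h3 : H.Reachable v e0.out.1 := he0in _ (Sym2.out_fst_mem e0)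
          exact hu (h2.trans h3.symm)
        rcases sides_cover hG hC u with hs | hs
        · exact Or.inl fun u' hu' => hs.trans (hstay u' hu')
        · exact Or.inr fun u' hu' => hs.trans (hstay u' hu')
    · exact ⟨fun _ => hx0, fun _ => ⟨v, hproper⟩⟩
  · -- x_{vw} = 1 : all edges of C have x = 1
    rw [hx1] at heq
    simp only [Nat.sub_self] at heq
    have hall1 : ∀ e ∈ C, x e = 1 := by
      intro e he
      have := (Finset.sum_eq_zero_iff.mp heq.symm) e he
      rcases h01 e with h | h
      · omega
      · exact h
    have hHC : ∀ {a b : V}, H.Reachable a b → (G.deleteEdges ↑C).Reachable a b := by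
      intro a b hr
      obtain ⟨p⟩ := hr
      refine ⟨p.transfer _ ?_⟩
      intro e he
      have h1 := p.edges_subset_edgeSet he
      rw [hHdef, edgeSet_deleteEdges] at h1
      rw [edgeSet_deleteEdges]
      refine ⟨h1.1, fun hmem => ?_⟩
      have := hall1 e hmem
      have := hHedge_x0 p e he
      omega
    have hnop : ∀ u : V, ¬ ProperlyConnected G v w C (compSupp H u) := by
      intro u hp
      have h1 : H.Reachable u v := hp.2.1
      have h2 : H.Reachable u w := hp.2.2.1
      exact hC.2.1 (hHC (h1.symm.trans h2))
    refine ⟨?_, part2, ?_⟩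
    · intro u
      refine Or.inr ⟨comp_conn u, ?_⟩
      rcases sides_cover hG hC u with hs | hs
      · exact Or.inl fun u' hu' => hs.trans (hHC hu')
      · exact Or.inr fun u' hu' => hs.trans (hHC hu')
    · constructor
      · rintro ⟨u, hp⟩
        exact absurd hp (hnop u)
      · intro h
        omega
end
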